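/- arXiv:1905.09895 — 7 statements merged into one kernel-verified Lean document; each statement's English description precedes it below -/
import Mathlib

section
/- Let (X_1,…,X_d) ∈ M_n(ℂ)^d. Then the limit lim_{k→∞} ( sup { ‖Σ_{1≤i_1,…,i_k≤d} a_{i_1,…,i_k} X_{i_1}⋯X_{i_k}‖ : a = (a_{i_1,…,i_k}) ∈ ℂ^{d^k}, Σ_{1≤i_1,…,i_k≤d} |a_{i_1,…,i_k}|² = 1 } )^{1/k} exists and equals the outer spectral radius ρ̂(X_1,…,X_d), where ‖·‖ denotes the operator (spectral) norm on M_n(ℂ). -/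
open scoped Kronecker
open Filter

/-- Operator (spectral) norm of a square complex matrix. -/
noncomputable def matOpNorm {m : Type*} [Fintype m] [DecidableEq m] (A : Matrix m m ℂ) : ℝ :=
  ‖Matrix.toEuclideanCLM (𝕜 := ℂ) A‖

/-- Spectral radius of a square complex matrix: the maximum modulus of its eigenvalues. -/
noncomputable def specRad {m : Type*} [Fintype m] [DecidableEq m] (A : Matrix m m ℂ) : ℝ :=
  sSup ((fun z : ℂ => ‖z‖) '' spectrum ℂ A)

/-- `T = Σᵢ conj(Xᵢ) ⊗ Xᵢ`. -/
noncomputable def outerT {ι m : Type*} [Fintype ι] [Fintype m] [DecidableEq m]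
    (X : ι → Matrix m m ℂ) : Matrix (m × m) (m × m) ℂ :=
  ∑ i, ((X i).map (starRingEnd ℂ)) ⊗ₖ (X i)

/-- The outer spectral radius `ρ̂(X₁,…,X_d) = sqrt (ρ (Σ conj(Xᵢ) ⊗ Xᵢ))`. -/
noncomputable def osr {ι m : Type*} [Fintype ι] [Fintype m] [DecidableEq m]
    (X : ι → Matrix m m ℂ) : ℝ :=
  Real.sqrt (specRad (outerT X))

section Aux
open Matrix
open scoped Topology ENNReal NNReal

lemma sum_pow_expand {R : Type*} [Semiring R] {d : ℕ} (M : Fin d → R) :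
    ∀ k : ℕ, (∑ i, M i) ^ k = ∑ f : Fin k → Fin d, (List.ofFn fun j => M (f j)).prod
  | 0 => by simp
  | (k+1) => by
    have h1 : (∑ f : Fin (k+1) → Fin d, (List.ofFn fun j => M (f j)).prod)
        = ∑ p : Fin d × (Fin k → Fin d), M p.1 * (List.ofFn fun j => M (p.2 j)).prod := by
      refine (Fintype.sum_equiv (Fin.consEquiv (fun _ => Fin d)) _ _ fun p => ?_).symm
      simp [List.ofFn_succ, Fin.consEquiv]
    rw [h1, Fintype.sum_prod_type, pow_succ', sum_pow_expand M k, Finset.mul_sum]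
    simp_rw [Finset.sum_mul]
    rw [Finset.sum_comm]

lemma kron_list_prod {n : ℕ} (L : List (Matrix (Fin n) (Fin n) ℂ)) :
    (L.map (fun A => (A.map (starRingEnd ℂ)) ⊗ₖ A)).prod
      = (L.prod.map (starRingEnd ℂ)) ⊗ₖ L.prod := by
  induction L with
  | nil => simp [Matrix.map_one _ (map_zero _) (map_one _), Matrix.one_kronecker_one]
  | cons A L ih => simp [ih, Matrix.map_mul, Matrix.mul_kronecker_mul]

/-- word of length k -/
noncomputable def word {n d : ℕ} (X : Fin d → Matrix (Fin n) (Fin n) ℂ) {k : ℕ}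
    (f : Fin k → Fin d) : Matrix (Fin n) (Fin n) ℂ :=
  (List.ofFn fun j => X (f j)).prod

lemma outerT_pow {n d : ℕ} (X : Fin d → Matrix (Fin n) (Fin n) ℂ) (k : ℕ) :
    outerT X ^ k = ∑ f : Fin k → Fin d, ((word X f).map (starRingEnd ℂ)) ⊗ₖ (word X f) := by
  rw [outerT, sum_pow_expand]
  refine Finset.sum_congr rfl fun f _ => ?_
  have : (List.ofFn fun j => ((X (f j)).map (starRingEnd ℂ)) ⊗ₖ (X (f j)))
      = (List.ofFn fun j => X (f j)).map (fun A => (A.map (starRingEnd ℂ)) ⊗ₖ A) := by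
    rw [List.map_ofFn]; rfl
  rw [this, kron_list_prod, word]

noncomputable def q2 {m : Type*} [Fintype m] (v : m → ℂ) : ℝ := ∑ i, ‖v i‖ ^ 2

lemma q2_nonneg {m : Type*} [Fintype m] (v : m → ℂ) : 0 ≤ q2 v :=
  Finset.sum_nonneg fun i _ => by positivity

lemma euclid_norm_eq {m : Type*} [Fintype m] (x : EuclideanSpace ℂ m) :
    ‖x‖ = Real.sqrt (q2 (fun i => x i)) := by
  rw [EuclideanSpace.norm_eq]
  congr 1

lemma toEuclideanCLM_apply_coord {m : Type*} [Fintype m] [DecidableEq m] (A : Matrix m m ℂ)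
    (x : EuclideanSpace ℂ m) (i : m) :
    (Matrix.toEuclideanCLM (𝕜 := ℂ) A x) i = (A *ᵥ (fun j => x j)) i := by
  have h := congrFun (Matrix.ofLp_toEuclideanCLM (𝕜 := ℂ) A x) i
  simpa [Matrix.toLin'_apply] using h

lemma sqrt_q2_mulVec_le {m : Type*} [Fintype m] [DecidableEq m] (A : Matrix m m ℂ) (v : m → ℂ) :
    Real.sqrt (q2 (A *ᵥ v)) ≤ matOpNorm A * Real.sqrt (q2 v) := by
  set x : EuclideanSpace ℂ m := (WithLp.equiv 2 _).symm v with hx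
  have h := (Matrix.toEuclideanCLM (𝕜 := ℂ) A).le_opNorm x
  have hxi : ∀ i, x i = v i := fun i => rfl
  have h1 : ‖x‖ = Real.sqrt (q2 v) := by rw [euclid_norm_eq]; rfl
  have h2 : ‖Matrix.toEuclideanCLM (𝕜 := ℂ) A x‖ = Real.sqrt (q2 (A *ᵥ v)) := by
    rw [euclid_norm_eq]
    congr 1
  rw [h1, h2] at h
  exact h

lemma matOpNorm_le {m : Type*} [Fintype m] [DecidableEq m] (A : Matrix m m ℂ) {C : ℝ} (hC : 0 ≤ C)
    (h : ∀ v : m → ℂ, Real.sqrt (q2 (A *ᵥ v)) ≤ C * Real.sqrt (q2 v)) : matOpNorm A ≤ C := by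
  refine ContinuousLinearMap.opNorm_le_bound _ hC fun x => ?_
  have h2 : ‖Matrix.toEuclideanCLM (𝕜 := ℂ) A x‖ = Real.sqrt (q2 (A *ᵥ (fun j => x j))) := by
    rw [euclid_norm_eq]
    congr 1
  rw [h2, euclid_norm_eq]
  exact h _

lemma abs_coord_le_sqrt_q2 {m : Type*} [Fintype m] (x : m → ℂ) (p : m) :
    ‖x p‖ ≤ Real.sqrt (q2 x) := by
  rw [show ‖x p‖ = Real.sqrt (‖x p‖ ^ 2) by
    rw [Real.sqrt_sq (norm_nonneg _)]]
  exact Real.sqrt_le_sqrt (Finset.single_le_sum (f := fun i => ‖x i‖ ^ 2)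
    (fun i _ => by positivity) (Finset.mem_univ p))

lemma abs_entry_le_matOpNorm {m : Type*} [Fintype m] [DecidableEq m] (A : Matrix m m ℂ)
    (i j : m) : ‖A i j‖ ≤ matOpNorm A := by
  have h := sqrt_q2_mulVec_le A (Pi.single j 1)
  have h1 : q2 (Pi.single j (1:ℂ)) = 1 := by
    simp [q2, Pi.single_apply, apply_ite (fun z : ℂ => ‖z‖)]
  rw [h1, Real.sqrt_one, mul_one] at h
  refine le_trans ?_ h
  have h2 : ‖(A *ᵥ Pi.single j 1) i‖ ≤ Real.sqrt (q2 (A *ᵥ Pi.single j 1)) :=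
    abs_coord_le_sqrt_q2 _ i
  simpa [Matrix.mulVec_single] using h2

lemma matOpNorm_le_frob {m : Type*} [Fintype m] [DecidableEq m] (A : Matrix m m ℂ) :
    matOpNorm A ≤ Real.sqrt (∑ i, ∑ j, ‖A i j‖ ^ 2) := by
  refine matOpNorm_le A (Real.sqrt_nonneg _) fun v => ?_
  rw [← Real.sqrt_mul (by positivity)]
  refine Real.sqrt_le_sqrt ?_
  rw [q2, Finset.sum_mul]
  refine Finset.sum_le_sum fun i _ => ?_
  have h1 : ‖(A *ᵥ v) i‖ ≤ ∑ j, ‖A i j‖ * ‖v j‖ := by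
    refine le_trans (le_of_eq (congrArg _ rfl)) ?_
    rw [Matrix.mulVec, dotProduct]
    exact le_trans (norm_sum_le _ _) (le_of_eq (Finset.sum_congr rfl fun j _ => norm_mul _ _))
  have h2 : (∑ j, ‖A i j‖ * ‖v j‖) ^ 2
      ≤ (∑ j, ‖A i j‖ ^ 2) * ∑ j, ‖v j‖ ^ 2 :=
    Finset.sum_mul_sq_le_sq_mul_sq _ _ _
  calc ‖(A *ᵥ v) i‖ ^ 2 ≤ (∑ j, ‖A i j‖ * ‖v j‖) ^ 2 := by
        exact pow_le_pow_left₀ (norm_nonneg _) h1 2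
    _ ≤ _ := h2

lemma kron_mulVec_diag {m : Type*} [Fintype m] (A : Matrix m m ℂ) (v : m → ℂ) (i : m) :
    (((A.map (starRingEnd ℂ)) ⊗ₖ A) *ᵥ (fun p : m × m => (starRingEnd ℂ) (v p.1) * v p.2)) (i, i)
      = ((‖(A *ᵥ v) i‖ ^ 2 : ℝ) : ℂ) := by
  have h1 : (((A.map (starRingEnd ℂ)) ⊗ₖ A) *ᵥ (fun p : m × m => (starRingEnd ℂ) (v p.1) * v p.2)) (i, i)
      = ∑ k, ∑ l, ((starRingEnd ℂ) (A i k) * A i l) * ((starRingEnd ℂ) (v k) * v l) := by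
    rw [Matrix.mulVec, dotProduct, Fintype.sum_prod_type]
    exact Finset.sum_congr rfl fun k _ => Finset.sum_congr rfl fun l _ => by
      simp [Matrix.kroneckerMap_apply, Matrix.map_apply]
  rw [h1]
  have h2 : ∑ k, ∑ l, ((starRingEnd ℂ) (A i k) * A i l) * ((starRingEnd ℂ) (v k) * v l)
      = ((starRingEnd ℂ) ((A *ᵥ v) i)) * ((A *ᵥ v) i) := by
    rw [Matrix.mulVec, dotProduct, map_sum, Finset.sum_mul_sum]
    exact Finset.sum_congr rfl fun k _ => Finset.sum_congr rfl fun l _ => by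
      rw [_root_.map_mul]; ring
  rw [h2, mul_comm, Complex.mul_conj, Complex.normSq_eq_norm_sq]

lemma sum_mulVec' {ι m' : Type*} [Fintype m'] (s : Finset ι) (M : ι → Matrix m' m' ℂ)
    (v : m' → ℂ) : (∑ i ∈ s, M i) *ᵥ v = ∑ i ∈ s, (M i) *ᵥ v := by
  ext j
  rw [Finset.sum_apply]
  show ∑ q, (∑ i ∈ s, M i) j q * v q = ∑ i ∈ s, ∑ q, (M i) j q * v q
  rw [Finset.sum_comm]
  refine Finset.sum_congr rfl fun q _ => ?_
  rw [Matrix.sum_apply, Finset.sum_mul]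

lemma sum_q2_words {n d : ℕ} (X : Fin d → Matrix (Fin n) (Fin n) ℂ) (k : ℕ) (v : Fin n → ℂ) :
    ((∑ f : Fin k → Fin d, q2 (word X f *ᵥ v) : ℝ) : ℂ)
      = ∑ i, ((outerT X ^ k) *ᵥ (fun p : Fin n × Fin n => (starRingEnd ℂ) (v p.1) * v p.2)) (i, i) := by
  set vv : Fin n × Fin n → ℂ := fun p => (starRingEnd ℂ) (v p.1) * v p.2 with hvvdef
  rw [outerT_pow]
  have hs : ∑ i : Fin n, ((∑ f : Fin k → Fin d, ((word X f).map (starRingEnd ℂ)) ⊗ₖ (word X f)) *ᵥ vv) (i, i)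
      = ∑ f : Fin k → Fin d, ∑ i : Fin n, ((((word X f).map (starRingEnd ℂ)) ⊗ₖ (word X f)) *ᵥ vv) (i, i) := by
    rw [← Finset.sum_comm]
    refine Finset.sum_congr rfl fun i _ => ?_
    rw [sum_mulVec']
    exact Finset.sum_apply _ _ _
  rw [hs, Complex.ofReal_sum]
  refine Finset.sum_congr rfl fun f _ => ?_
  rw [show q2 (word X f *ᵥ v) = ∑ i, ‖(word X f *ᵥ v) i‖ ^ 2 from rfl,
    Complex.ofReal_sum]
  exact Finset.sum_congr rfl fun i _ => (kron_mulVec_diag (word X f) v i).symm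

lemma sum_q2_words_le {n d : ℕ} (X : Fin d → Matrix (Fin n) (Fin n) ℂ) (k : ℕ) (v : Fin n → ℂ) :
    ∑ f : Fin k → Fin d, q2 (word X f *ᵥ v) ≤ n * (matOpNorm (outerT X ^ k) * q2 v) := by
  set vv : Fin n × Fin n → ℂ := fun p => (starRingEnd ℂ) (v p.1) * v p.2 with hvvdef
  have hvv : q2 vv = q2 v * q2 v := by
    have h1 : q2 vv = ∑ a : Fin n, ∑ b : Fin n, ‖v a‖ ^ 2 * ‖v b‖ ^ 2 := by
      rw [show q2 vv = ∑ p : Fin n × Fin n, ‖vv p‖ ^ 2 from rfl, Fintype.sum_prod_type]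
      exact Finset.sum_congr rfl fun a _ => Finset.sum_congr rfl fun b _ => by
        simp [hvvdef, _root_.map_mul, mul_pow]
    rw [h1, show q2 v = ∑ a, ‖v a‖ ^ 2 from rfl, Finset.sum_mul_sum]
  have hre : ∑ f : Fin k → Fin d, q2 (word X f *ᵥ v)
      = (∑ i : Fin n, ((outerT X ^ k) *ᵥ vv) (i, i)).re := by
    rw [← sum_q2_words X k v, Complex.ofReal_re]
  rw [hre]
  refine le_trans (Complex.re_le_norm _) ?_
  refine le_trans (norm_sum_le _ _) ?_
  have hcb : ∀ i : Fin n, ‖((outerT X ^ k) *ᵥ vv) (i, i)‖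
      ≤ matOpNorm (outerT X ^ k) * q2 v := by
    intro i
    refine le_trans (abs_coord_le_sqrt_q2 _ _) (le_trans (sqrt_q2_mulVec_le _ _) ?_)
    rw [hvv, Real.sqrt_mul_self (q2_nonneg v)]
  refine le_trans (Finset.sum_le_sum fun i _ => hcb i) ?_
  rw [Finset.sum_const, Finset.card_univ, Fintype.card_fin, nsmul_eq_mul]

lemma upper_bound {n d : ℕ} (X : Fin d → Matrix (Fin n) (Fin n) ℂ) {k : ℕ}
    (a : (Fin k → Fin d) → ℂ) (ha : ∑ f, ‖a f‖ ^ 2 = 1) :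
    matOpNorm (∑ f, a f • word X f) ≤ Real.sqrt (n * matOpNorm (outerT X ^ k)) := by
  have hTnn : (0:ℝ) ≤ matOpNorm (outerT X ^ k) := norm_nonneg _
  refine matOpNorm_le _ (Real.sqrt_nonneg _) fun v => ?_
  rw [← Real.sqrt_mul (by positivity)]
  refine Real.sqrt_le_sqrt ?_
  have hco : ∀ i, ((∑ f, a f • word X f) *ᵥ v) i = ∑ f, a f * (word X f *ᵥ v) i := by
    intro i
    rw [sum_mulVec', Finset.sum_apply]
    refine Finset.sum_congr rfl fun f _ => ?_
    rw [Matrix.smul_mulVec]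
    rfl
  have h1 : ∀ i, ‖((∑ f, a f • word X f) *ᵥ v) i‖ ^ 2
      ≤ ∑ f : Fin k → Fin d, ‖(word X f *ᵥ v) i‖ ^ 2 := by
    intro i
    rw [hco i]
    have hcs : ‖∑ f : Fin k → Fin d, a f * (word X f *ᵥ v) i‖
        ≤ Real.sqrt (∑ f : Fin k → Fin d, ‖a f‖ ^ 2)
          * Real.sqrt (∑ f : Fin k → Fin d, ‖(word X f *ᵥ v) i‖ ^ 2) := by
      refine le_trans (norm_sum_le _ _) ?_
      refine le_trans (le_of_eq (Finset.sum_congr rfl fun f _ => norm_mul _ _)) ?_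
      exact Real.sum_mul_le_sqrt_mul_sqrt _ _ _
    rw [ha, Real.sqrt_one, one_mul] at hcs
    calc ‖∑ f : Fin k → Fin d, a f * (word X f *ᵥ v) i‖ ^ 2
        ≤ Real.sqrt (∑ f : Fin k → Fin d, ‖(word X f *ᵥ v) i‖ ^ 2) ^ 2 :=
          pow_le_pow_left₀ (norm_nonneg _) hcs 2
      _ = _ := Real.sq_sqrt (Finset.sum_nonneg fun f _ => by positivity)
  calc q2 ((∑ f, a f • word X f) *ᵥ v)
      ≤ ∑ i, ∑ f : Fin k → Fin d, ‖(word X f *ᵥ v) i‖ ^ 2 :=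
        Finset.sum_le_sum fun i _ => h1 i
    _ = ∑ f : Fin k → Fin d, q2 (word X f *ᵥ v) := Finset.sum_comm
    _ ≤ n * (matOpNorm (outerT X ^ k) * q2 v) := sum_q2_words_le X k v
    _ = n * matOpNorm (outerT X ^ k) * q2 v := by ring

lemma outerT_pow_entry {n d : ℕ} (X : Fin d → Matrix (Fin n) (Fin n) ℂ) (k : ℕ)
    (p q : Fin n × Fin n) :
    (outerT X ^ k) p q
      = ∑ f : Fin k → Fin d, (starRingEnd ℂ) ((word X f) p.1 q.1) * (word X f) p.2 q.2 := by
  rw [outerT_pow, Matrix.sum_apply]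
  exact Finset.sum_congr rfl fun f _ => by simp [Matrix.kroneckerMap_apply, Matrix.map_apply]

lemma entry_abs_bound {n d : ℕ} (X : Fin d → Matrix (Fin n) (Fin n) ℂ) (k : ℕ)
    (p q : Fin n × Fin n) :
    ‖(outerT X ^ k) p q‖
      ≤ Real.sqrt (∑ f : Fin k → Fin d, ‖(word X f) p.1 q.1‖ ^ 2)
        * Real.sqrt (∑ f : Fin k → Fin d, ‖(word X f) p.2 q.2‖ ^ 2) := by
  rw [outerT_pow_entry]
  refine le_trans (norm_sum_le _ _) ?_
  refine le_trans (le_of_eq (Finset.sum_congr rfl fun f _ => ?_)) (Real.sum_mul_le_sqrt_mul_sqrt _ _ _)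
  rw [norm_mul, Complex.norm_conj]

lemma gelfand_matrix {m : Type*} [Fintype m] [DecidableEq m] [Nonempty m] (A : Matrix m m ℂ) :
    Tendsto (fun k : ℕ => matOpNorm (A ^ k) ^ ((k : ℝ)⁻¹)) atTop (𝓝 (specRad A))
      ∧ 0 ≤ specRad A := by
  set a := Matrix.toEuclideanCLM (𝕜 := ℂ) A with ha
  haveI : Nontrivial (EuclideanSpace ℂ m) := by
    refine ⟨⟨EuclideanSpace.single (Classical.arbitrary m) 1, 0, fun h => ?_⟩⟩
    have h1 := congrFun congr($(h)) (Classical.arbitrary m)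
    simp [EuclideanSpace.single_apply] at h1
  haveI : Nontrivial (EuclideanSpace ℂ m →L[ℂ] EuclideanSpace ℂ m) := by
    obtain ⟨x, hx⟩ := exists_ne (0 : EuclideanSpace ℂ m)
    refine ⟨⟨1, 0, fun h => hx ?_⟩⟩
    have := congrFun congr(⇑$(h)) x
    simpa using this
  obtain ⟨z₀, hz₀mem, hz₀⟩ := spectrum.exists_nnnorm_eq_spectralRadius a
  have hspec : spectrum ℂ a = spectrum ℂ A := AlgEquiv.spectrum_eq (Matrix.toEuclideanCLM (𝕜 := ℂ)) A
  have hub : ∀ z ∈ spectrum ℂ A, ‖z‖ ≤ ‖z₀‖ := by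
    intro z hz
    rw [← hspec] at hz
    have h1 : (‖z‖₊ : ℝ≥0∞) ≤ spectralRadius ℂ a := by
      rw [spectralRadius]
      exact le_iSup₂ (f := fun w _ => (‖w‖₊ : ℝ≥0∞)) z hz
    rw [← hz₀] at h1
    have h2 : ‖z‖₊ ≤ ‖z₀‖₊ := by exact_mod_cast h1
    exact NNReal.coe_le_coe.mpr h2
  have hgreat : IsGreatest ((fun z : ℂ => ‖z‖) '' spectrum ℂ A) ‖z₀‖ := by
    constructor
    · exact ⟨z₀, hspec ▸ hz₀mem, rfl⟩
    · rintro r ⟨z, hz, rfl⟩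
      exact hub z hz
  have hsup : specRad A = ‖z₀‖ := hgreat.csSup_eq
  have hnn : 0 ≤ specRad A := hsup ▸ norm_nonneg _
  refine ⟨?_, hnn⟩
  have htop : spectralRadius ℂ a ≠ ⊤ := by rw [← hz₀]; exact ENNReal.coe_ne_top
  have h0 := spectrum.pow_nnnorm_pow_one_div_tendsto_nhds_spectralRadius a
  have h1 := (ENNReal.tendsto_toReal htop).comp h0
  have h2 : (spectralRadius ℂ a).toReal = specRad A := by
    rw [← hz₀, hsup]
    simp
  rw [h2] at h1
  refine h1.congr fun k => ?_
  simp only [Function.comp_apply]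
  rw [← ENNReal.toReal_rpow]
  simp only [ENNReal.coe_toReal, coe_nnnorm]
  rw [one_div]
  congr 1
  rw [ha, ← map_pow]
  rfl

lemma sSup_zero_of_subset {s : Set ℝ} (h : s ⊆ {0}) : sSup s = 0 := by
  rcases Set.eq_empty_or_nonempty s with h0 | h0
  · rw [h0]; exact Real.sSup_empty
  · obtain ⟨x, hx⟩ := h0
    have hx0 : x = 0 := h hx
    have : s = {0} := Set.Subset.antisymm h (Set.singleton_subset_iff.mpr (hx0 ▸ hx))
    rw [this]; exact csSup_singleton _

lemma const_rpow_inv_tendsto {c : ℝ} (hc : 0 < c) :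
    Tendsto (fun k : ℕ => c ^ ((k : ℝ)⁻¹)) atTop (𝓝 1) := by
  have hk : Tendsto (fun k : ℕ => ((k : ℝ))⁻¹) atTop (𝓝 0) :=
    tendsto_inv_atTop_zero.comp tendsto_natCast_atTop_atTop
  have hcont : ContinuousAt (fun p : ℝ × ℝ => p.1 ^ p.2) (c, 0) :=
    Real.continuousAt_rpow (c, 0) (Or.inl hc.ne')
  have := hcont.tendsto.comp (tendsto_const_nhds.prodMk_nhds hk)
  simpa [Real.rpow_zero, Function.comp_def] using this

lemma sqrt_rpow_inv {x : ℝ} (hx : 0 ≤ x) (c : ℝ) :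
    (Real.sqrt x) ^ c = Real.sqrt (x ^ c) := by
  rw [Real.sqrt_eq_rpow, Real.sqrt_eq_rpow, ← Real.rpow_mul hx, ← Real.rpow_mul hx, mul_comm]


/-- the set of norms of unit combinations of length-`k` words -/
def SK {n d : ℕ} (X : Fin d → Matrix (Fin n) (Fin n) ℂ) (k : ℕ) : Set ℝ :=
  { r : ℝ | ∃ a : (Fin k → Fin d) → ℂ,
      (∑ f, ‖a f‖ ^ 2) = 1 ∧
      r = matOpNorm (∑ f, a f • (List.ofFn fun j => X (f j)).prod) }

lemma SK_mem_nonneg {n d : ℕ} {X : Fin d → Matrix (Fin n) (Fin n) ℂ} {k : ℕ} {r : ℝ}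
    (hr : r ∈ SK X k) : 0 ≤ r := by
  obtain ⟨a, -, rfl⟩ := hr
  exact norm_nonneg _

lemma SK_nonempty {n d : ℕ} (X : Fin d → Matrix (Fin n) (Fin n) ℂ) (hd : 0 < d) (k : ℕ) :
    (SK X k).Nonempty := by
  classical
  set g₀ : Fin k → Fin d := fun _ => ⟨0, hd⟩ with hg
  refine ⟨matOpNorm (∑ f, (if f = g₀ then (1:ℂ) else 0) • (List.ofFn fun j => X (f j)).prod),
    ⟨fun f => if f = g₀ then 1 else 0, ?_, rfl⟩⟩
  simp [apply_ite (fun z : ℂ => ‖z‖), ite_pow]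

lemma SK_bddAbove {n d : ℕ} (X : Fin d → Matrix (Fin n) (Fin n) ℂ) (k : ℕ) :
    BddAbove (SK X k) := by
  refine ⟨Real.sqrt (n * matOpNorm (outerT X ^ k)), ?_⟩
  rintro r ⟨a, ha, rfl⟩
  exact upper_bound X a ha

lemma SK_sSup_nonneg {n d : ℕ} (X : Fin d → Matrix (Fin n) (Fin n) ℂ) (hd : 0 < d) (k : ℕ) :
    0 ≤ sSup (SK X k) := by
  obtain ⟨r, hr⟩ := SK_nonempty X hd k
  exact le_trans (SK_mem_nonneg hr) (le_csSup (SK_bddAbove X k) hr)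

lemma SK_sSup_le {n d : ℕ} (X : Fin d → Matrix (Fin n) (Fin n) ℂ) (hd : 0 < d) (k : ℕ) :
    sSup (SK X k) ≤ Real.sqrt n * Real.sqrt (matOpNorm (outerT X ^ k)) := by
  refine csSup_le (SK_nonempty X hd k) ?_
  rintro r ⟨a, ha, rfl⟩
  refine le_trans (upper_bound X a ha) (le_of_eq ?_)
  rw [Real.sqrt_mul (by positivity)]

lemma SK_sSup_lower {n d : ℕ} (X : Fin d → Matrix (Fin n) (Fin n) ℂ) (hn : 0 < n) (hd : 0 < d)
    (k : ℕ) : Real.sqrt (matOpNorm (outerT X ^ k)) ≤ n * sSup (SK X k) := by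
  classical
  obtain ⟨p₀, -, hp₀⟩ := Finset.exists_max_image (Finset.univ : Finset (Fin n × Fin n))
    (fun p => ∑ f : Fin k → Fin d, ‖(word X f) p.1 p.2‖ ^ 2)
    ⟨(⟨0, hn⟩, ⟨0, hn⟩), Finset.mem_univ _⟩
  set Smax := ∑ f : Fin k → Fin d, ‖(word X f) p₀.1 p₀.2‖ ^ 2 with hSmax
  have hSmax0 : 0 ≤ Smax := Finset.sum_nonneg fun f _ => by positivity
  have hstep1 : Real.sqrt Smax ≤ sSup (SK X k) := by
    rcases eq_or_lt_of_le hSmax0 with h0 | h0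
    · rw [← h0, Real.sqrt_zero]
      exact SK_sSup_nonneg X hd k
    · set a : (Fin k → Fin d) → ℂ :=
        fun f => (starRingEnd ℂ) ((word X f) p₀.1 p₀.2) / ((Real.sqrt Smax : ℝ) : ℂ) with hadef
      have hsum : ∑ f, ‖a f‖ ^ 2 = 1 := by
        have he : ∀ f : Fin k → Fin d,
            ‖a f‖ ^ 2 = ‖(word X f) p₀.1 p₀.2‖ ^ 2 / Smax := by
          intro f
          rw [hadef]
          simp only [norm_div, Complex.norm_conj, Complex.norm_real, Real.norm_eq_abs,
            abs_of_nonneg (Real.sqrt_nonneg _), div_pow]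
          rw [Real.sq_sqrt h0.le]
        rw [Finset.sum_congr rfl fun f _ => he f, ← Finset.sum_div, ← hSmax, div_self h0.ne']
      have hentry : (∑ f, a f • word X f) p₀.1 p₀.2 = ((Real.sqrt Smax : ℝ) : ℂ) := by
        rw [Matrix.sum_apply]
        have he : ∀ f : Fin k → Fin d, (a f • word X f) p₀.1 p₀.2
            = ((‖(word X f) p₀.1 p₀.2‖ ^ 2 : ℝ) : ℂ)
              / ((Real.sqrt Smax : ℝ) : ℂ) := by
          intro f
          rw [Matrix.smul_apply, smul_eq_mul, hadef]
          rw [div_mul_eq_mul_div, mul_comm, Complex.mul_conj, Complex.normSq_eq_norm_sq]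
        rw [Finset.sum_congr rfl fun f _ => he f, ← Finset.sum_div, ← Complex.ofReal_sum,
          ← hSmax]
        rw [show ((Smax : ℝ) : ℂ) = ((Real.sqrt Smax * Real.sqrt Smax : ℝ) : ℂ) by
          rw [Real.mul_self_sqrt hSmax0]]
        push_cast
        rw [mul_div_assoc, div_self, mul_one]
        exact_mod_cast (Real.sqrt_ne_zero'.mpr h0)
      have hle : Real.sqrt Smax ≤ matOpNorm (∑ f, a f • word X f) := by
        have h2 := abs_entry_le_matOpNorm (∑ f, a f • word X f) p₀.1 p₀.2
        rw [hentry] at h2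
        simpa [Complex.norm_real, Real.norm_eq_abs, abs_of_nonneg (Real.sqrt_nonneg _)] using h2
      exact le_trans hle (le_csSup (SK_bddAbove X k) ⟨a, hsum, rfl⟩)
  have hstep2 : matOpNorm (outerT X ^ k) ≤ ((n : ℝ) * Real.sqrt Smax) ^ 2 := by
    refine le_trans (matOpNorm_le_frob _) ?_
    rw [show ((n:ℝ) * Real.sqrt Smax) ^ 2
        = Real.sqrt ((((n:ℝ) * Real.sqrt Smax) ^ 2) ^ 2) from (Real.sqrt_sq (by positivity)).symm]
    refine Real.sqrt_le_sqrt ?_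
    have hent : ∀ p q : Fin n × Fin n, ‖(outerT X ^ k) p q‖ ^ 2 ≤ Smax ^ 2 := by
      intro p q
      have h1 := entry_abs_bound X k p q
      have h2 : Real.sqrt (∑ f : Fin k → Fin d, ‖(word X f) p.1 q.1‖ ^ 2)
          ≤ Real.sqrt Smax := Real.sqrt_le_sqrt (hp₀ (p.1, q.1) (Finset.mem_univ _))
      have h3 : Real.sqrt (∑ f : Fin k → Fin d, ‖(word X f) p.2 q.2‖ ^ 2)
          ≤ Real.sqrt Smax := Real.sqrt_le_sqrt (hp₀ (p.2, q.2) (Finset.mem_univ _))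
      have h4 : ‖(outerT X ^ k) p q‖ ≤ Real.sqrt Smax * Real.sqrt Smax :=
        le_trans h1 (mul_le_mul h2 h3 (Real.sqrt_nonneg _) (Real.sqrt_nonneg _))
      rw [Real.mul_self_sqrt hSmax0] at h4
      exact pow_le_pow_left₀ (norm_nonneg _) h4 2
    calc ∑ p, ∑ q, ‖(outerT X ^ k) p q‖ ^ 2
        ≤ ∑ _p : Fin n × Fin n, ∑ _q : Fin n × Fin n, Smax ^ 2 :=
          Finset.sum_le_sum fun p _ => Finset.sum_le_sum fun q _ => hent p q
      _ = (((n:ℝ) * Real.sqrt Smax) ^ 2) ^ 2 := by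
          rw [Finset.sum_const, Finset.sum_const, Finset.card_univ, nsmul_eq_mul, nsmul_eq_mul,
            Fintype.card_prod, Fintype.card_fin]
          push_cast
          rw [mul_pow, Real.sq_sqrt hSmax0]
          ring
  have h5 : Real.sqrt (matOpNorm (outerT X ^ k)) ≤ (n : ℝ) * Real.sqrt Smax := by
    refine le_trans (Real.sqrt_le_sqrt hstep2) (le_of_eq ?_)
    exact Real.sqrt_sq (by positivity)
  refine le_trans h5 ?_
  exact mul_le_mul_of_nonneg_left hstep1 (by positivity)

end Aux

/-- the limit of the k-th roots of the suprema of operator norms of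
unit-ℓ² combinations of length-k words exists and equals the outer spectral radius. -/
theorem stmt0 {n d : ℕ} (X : Fin d → Matrix (Fin n) (Fin n) ℂ) :
    Filter.Tendsto (fun k : ℕ =>
      (sSup { r : ℝ | ∃ a : (Fin k → Fin d) → ℂ,
          (∑ f, ‖a f‖ ^ 2) = 1 ∧
          r = matOpNorm (∑ f, a f • (List.ofFn fun j => X (f j)).prod) }) ^ ((k : ℝ)⁻¹))
      Filter.atTop (nhds (osr X)) := by
  classical
  show Filter.Tendsto (fun k : ℕ => (sSup (SK X k)) ^ ((k : ℝ)⁻¹)) Filter.atTop (nhds (osr X))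
  by_cases hn : n = 0
  · subst hn
    haveI hE : Subsingleton (EuclideanSpace ℂ (Fin 0)) := ⟨fun a b => PiLp.ext fun i : Fin 0 => i.elim0⟩
    have hm : ∀ A : Matrix (Fin 0) (Fin 0) ℂ, matOpNorm A = 0 := by
      intro A
      rw [matOpNorm, show Matrix.toEuclideanCLM (𝕜 := ℂ) A = 0 from
        ContinuousLinearMap.ext fun x => Subsingleton.elim _ _, norm_zero]
    have hosr : osr X = 0 := by
      haveI hsub : Subsingleton (Matrix (Fin 0 × Fin 0) (Fin 0 × Fin 0) ℂ) :=
        ⟨fun a b => by ext i j; exact i.1.elim0⟩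
      have hspec : spectrum ℂ (outerT X) = ∅ := by
        rw [Set.eq_empty_iff_forall_notMem]
        exact fun z hz => (spectrum.notMem_iff.mpr (isUnit_of_subsingleton _)) hz
      rw [osr, specRad, hspec, Set.image_empty, Real.sSup_empty, Real.sqrt_zero]
    rw [hosr]
    have hev : (fun k : ℕ => (sSup (SK X k)) ^ ((k : ℝ)⁻¹)) =ᶠ[Filter.atTop]
        fun _ => (0 : ℝ) := by
      filter_upwards [eventually_ge_atTop 1] with k hk
      have h0 : sSup (SK X k) = 0 := by
        refine sSup_zero_of_subset ?_
        rintro r ⟨a, ha, rfl⟩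
        exact hm _
      rw [h0]
      exact Real.zero_rpow (inv_ne_zero (Nat.cast_ne_zero.mpr (Nat.one_le_iff_ne_zero.mp hk)))
    exact Tendsto.congr' hev.symm tendsto_const_nhds
  by_cases hd : d = 0
  · subst hd
    have hn1 : 0 < n := Nat.pos_of_ne_zero hn
    haveI : Nonempty (Fin n × Fin n) := ⟨(⟨0, hn1⟩, ⟨0, hn1⟩)⟩
    have hosr : osr X = 0 := by
      have hT : outerT X = 0 := by simp [outerT]
      rw [osr, specRad, hT, spectrum.zero_eq, Set.image_singleton, norm_zero, csSup_singleton,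
        Real.sqrt_zero]
    rw [hosr]
    have hev : (fun k : ℕ => (sSup (SK X k)) ^ ((k : ℝ)⁻¹)) =ᶠ[Filter.atTop]
        fun _ => (0 : ℝ) := by
      filter_upwards [eventually_ge_atTop 1] with k hk
      have hempty : SK X k = ∅ := by
        rw [Set.eq_empty_iff_forall_notMem]
        rintro r ⟨a, ha, -⟩
        haveI : IsEmpty (Fin k → Fin 0) := ⟨fun f => (f ⟨0, hk⟩).elim0⟩
        simp at ha
      rw [hempty, Real.sSup_empty]
      exact Real.zero_rpow (inv_ne_zero (Nat.cast_ne_zero.mpr (Nat.one_le_iff_ne_zero.mp hk)))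
    exact Tendsto.congr' hev.symm tendsto_const_nhds
  · have hn1 : 0 < n := Nat.pos_of_ne_zero hn
    have hd1 : 0 < d := Nat.pos_of_ne_zero hd
    haveI : Nonempty (Fin n × Fin n) := ⟨(⟨0, hn1⟩, ⟨0, hn1⟩)⟩
    obtain ⟨hG, hρnn⟩ := gelfand_matrix (outerT X)
    have hNnn : ∀ k : ℕ, (0:ℝ) ≤ matOpNorm (outerT X ^ k) := fun k => norm_nonneg _
    have hNt : Filter.Tendsto (fun k : ℕ => Real.sqrt (matOpNorm (outerT X ^ k)) ^ ((k:ℝ)⁻¹))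
        Filter.atTop (nhds (Real.sqrt (specRad (outerT X)))) := by
      have h1 : (fun k : ℕ => Real.sqrt (matOpNorm (outerT X ^ k)) ^ ((k:ℝ)⁻¹))
          = fun k : ℕ => Real.sqrt (matOpNorm (outerT X ^ k) ^ ((k:ℝ)⁻¹)) :=
        funext fun k => sqrt_rpow_inv (hNnn k) _
      rw [h1]
      exact (Real.continuous_sqrt.tendsto _).comp hG
    have hlo : Filter.Tendsto
        (fun k : ℕ => ((n:ℝ)⁻¹) ^ ((k:ℝ)⁻¹) * Real.sqrt (matOpNorm (outerT X ^ k)) ^ ((k:ℝ)⁻¹))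
        Filter.atTop (nhds (Real.sqrt (specRad (outerT X)))) := by
      have := (const_rpow_inv_tendsto (c := ((n:ℝ))⁻¹) (by positivity)).mul hNt
      simpa using this
    have hhi : Filter.Tendsto
        (fun k : ℕ => (Real.sqrt n) ^ ((k:ℝ)⁻¹) * Real.sqrt (matOpNorm (outerT X ^ k)) ^ ((k:ℝ)⁻¹))
        Filter.atTop (nhds (Real.sqrt (specRad (outerT X)))) := by
      have := (const_rpow_inv_tendsto (c := Real.sqrt n)
        (Real.sqrt_pos.mpr (by exact_mod_cast hn1))).mul hNt
      simpa using this
    have hosr : osr X = Real.sqrt (specRad (outerT X)) := rfl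
    rw [hosr]
    refine tendsto_of_tendsto_of_tendsto_of_le_of_le hlo hhi (fun k => ?_) (fun k => ?_)
    · rw [← Real.mul_rpow (by positivity) (Real.sqrt_nonneg _)]
      refine Real.rpow_le_rpow (by positivity) ?_ (by positivity)
      have h := SK_sSup_lower X hn1 hd1 k
      calc ((n:ℝ))⁻¹ * Real.sqrt (matOpNorm (outerT X ^ k))
          ≤ ((n:ℝ))⁻¹ * ((n:ℝ) * sSup (SK X k)) :=
            mul_le_mul_of_nonneg_left h (by positivity)
        _ = sSup (SK X k) := by
            rw [← mul_assoc, inv_mul_cancel₀ (by exact_mod_cast hn1.ne' : (n:ℝ) ≠ 0), one_mul]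
    · rw [← Real.mul_rpow (Real.sqrt_nonneg _) (Real.sqrt_nonneg _)]
      exact Real.rpow_le_rpow (SK_sSup_nonneg X hd1 k) (SK_sSup_le X hd1 k) (by positivity)
end

section
/- For all A, B, C, D ∈ M_n(ℂ) and all E ∈ M_{n²}(ℂ): (conj(A) ⊗ B) · E^ψ · (C ⊗ D^*) = ( (conj(D) ⊗ B) · E · (C ⊗ A^*) )^ψ, where ⊗ is the Kronecker product and conj denotes the entrywise complex conjugate. -/
open scoped Kronecker
open Matrix

/-- The ψ involution on `M_{n²}(ℂ)`.  Identifying the index `a + (b−1)n` (1-based) of the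
paper with the pair `(b, a)` (block index first, as in Mathlib's Kronecker product), the
defining relation `ψ(E_{i+(j−1)n, k+(l−1)n}) = E_{i+(k−1)n, j+(l−1)n}` becomes
`ψ(M) (p₁,p₂) (q₁,q₂) = M (q₂,p₂) (q₁,p₁)`. -/
def psi {n : ℕ} (M : Matrix (Fin n × Fin n) (Fin n × Fin n) ℂ) :
    Matrix (Fin n × Fin n) (Fin n × Fin n) ℂ :=
  Matrix.of fun p q => M (q.2, p.2) (q.1, p.1)

/-- 4-modularity:
`(conj(A) ⊗ B) · Eᵠ · (C ⊗ D^*) = ((conj(D) ⊗ B) · E · (C ⊗ A^*))ᵠ`. -/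
theorem stmt7 {n : ℕ} (A B C D : Matrix (Fin n) (Fin n) ℂ)
    (E : Matrix (Fin n × Fin n) (Fin n × Fin n) ℂ) :
    ((A.map (starRingEnd ℂ)) ⊗ₖ B) * psi E * (C ⊗ₖ Dᴴ) =
      psi (((D.map (starRingEnd ℂ)) ⊗ₖ B) * E * (C ⊗ₖ Aᴴ)) := by
  ext ⟨p1, p2⟩ ⟨q1, q2⟩
  simp only [psi, of_apply, mul_apply, kroneckerMap_apply, conjTranspose_apply, map_apply,
    Fintype.sum_prod_type, Finset.mul_sum, Finset.sum_mul]
  refine Finset.sum_congr rfl fun a _ => ?_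
  rw [Finset.sum_comm (f := fun b c => ∑ d : Fin n,
    (starRingEnd ℂ) (A p1 c) * B p2 d * E (b, d) (a, c) * (C a q1 * star (D q2 b)))]
  refine Finset.sum_congr rfl fun b _ => ?_
  refine Finset.sum_congr rfl fun c _ => ?_
  refine Finset.sum_congr rfl fun d _ => ?_
  simp only [starRingEnd_apply]
  ring
end

section
/- If E, F ∈ M_{n²}(ℂ) are positive semidefinite, then (E^ψ F^ψ)^ψ is positive semidefinite. -/
open scoped ComplexOrder
open Matrix

/-- Schur product property: if `E, F` are positive semidefinite, then
`(Eᵠ Fᵠ)ᵠ` is positive semidefinite. -/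
theorem stmt8 {n : ℕ} (E F : Matrix (Fin n × Fin n) (Fin n × Fin n) ℂ)
    (hE : E.PosSemidef) (hF : F.PosSemidef) :
    (psi (psi E * psi F)).PosSemidef := by
  obtain ⟨A, rfl⟩ : ∃ A : Matrix (Fin n × Fin n) (Fin n × Fin n) ℂ, _ = Aᴴ * A := by
    open scoped MatrixOrder in exact CStarAlgebra.nonneg_iff_eq_star_mul_self.mp hE.nonneg
  obtain ⟨B, rfl⟩ : ∃ B : Matrix (Fin n × Fin n) (Fin n × Fin n) ℂ, _ = Bᴴ * B := by
    open scoped MatrixOrder in exact CStarAlgebra.nonneg_iff_eq_star_mul_self.mp hF.nonneg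
  set C : Matrix ((Fin n × Fin n) × (Fin n × Fin n)) (Fin n × Fin n) ℂ :=
    Matrix.of fun st q => ∑ r : Fin n, A st.1 (r, q.2) * B st.2 (q.1, r) with hC
  have key : psi (psi (Aᴴ * A) * psi (Bᴴ * B)) = Cᴴ * C := by
    ext p q
    simp only [psi, Matrix.mul_apply, Matrix.conjTranspose_apply, Matrix.of_apply, hC,
      Finset.sum_mul, Finset.mul_sum, star_sum, star_mul']
    rw [Fintype.sum_prod_type, Fintype.sum_prod_type]
    conv_lhs => rw [Finset.sum_comm]
    conv_lhs => enter [2, x]; rw [Finset.sum_comm]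
    conv_lhs => enter [2, x, 2, t]; rw [Finset.sum_comm]
    conv_lhs => rw [Finset.sum_comm]
    conv_lhs => enter [2, t]; rw [Finset.sum_comm]
    conv_lhs => rw [Finset.sum_comm]
    conv_lhs => enter [2, s, 2, t]; rw [Finset.sum_comm]
    refine Finset.sum_congr rfl fun s _ => Finset.sum_congr rfl fun t _ =>
      Finset.sum_congr rfl fun x _ => Finset.sum_congr rfl fun y _ => ?_
    ring
  rw [key]
  exact Matrix.posSemidef_conjTranspose_mul_self C
end

section
/- If E, F ∈ M_{n²}(ℂ) are such that Q(E) is positive semidefinite and F is positive semidefinite, then Q( (F^ψ E^ψ)^ψ ) is positive semidefinite. -/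
open scoped ComplexOrder
open Matrix

/-- The partial trace `Q : M_{n²}(ℂ) → M_n(ℂ)`, determined by
`Q(E_{i+n(j−1), k+n(l−1)}) = δ_{jl} E_{i,k}`; in pair notation
`Q(M) i k = Σⱼ M (j,i) (j,k)`. -/
noncomputable def pTrace {n : ℕ} (M : Matrix (Fin n × Fin n) (Fin n × Fin n) ℂ) :
    Matrix (Fin n) (Fin n) ℂ :=
  Matrix.of fun i k => ∑ j, M (j, i) (j, k)

/-- product property of `Q`: if `Q(E)` is positive semidefinite and `F` is
positive semidefinite, then `Q((Fᵠ Eᵠ)ᵠ)` is positive semidefinite. -/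
theorem stmt9 {n : ℕ} (E F : Matrix (Fin n × Fin n) (Fin n × Fin n) ℂ)
    (hE : (pTrace E).PosSemidef) (hF : F.PosSemidef) :
    (pTrace (psi (psi F * psi E))).PosSemidef := by
  obtain ⟨C, hC⟩ : ∃ C, _ = Cᴴ * C := by
    classical
    open scoped MatrixOrder in
    exact CStarAlgebra.nonneg_iff_eq_star_mul_self.mp hE.nonneg
  obtain ⟨D, hD⟩ : ∃ D, _ = Dᴴ * D := by
    classical
    open scoped MatrixOrder in
    exact CStarAlgebra.nonneg_iff_eq_star_mul_self.mp hF.nonneg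
  set B : Matrix (Fin n × (Fin n × Fin n)) (Fin n) ℂ :=
    Matrix.of (fun st i => ∑ a, C st.1 a * D st.2 (a, i)) with hB
  have key : pTrace (psi (psi F * psi E)) = Bᴴ * B := by
    ext i k
    have hG : ∀ a b : Fin n, (∑ j, E (j, a) (j, b)) = ∑ s, star (C s a) * C s b := by
      intro a b
      have := congrFun (congrFun hC a) b
      simpa [pTrace, mul_apply, conjTranspose_apply] using this
    have hFe : ∀ a b : Fin n × Fin n, F a b = ∑ t, star (D t a) * D t b := by
      intro a b
      have := congrFun (congrFun hD a) b
      simpa [mul_apply, conjTranspose_apply] using this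
    calc (pTrace (psi (psi F * psi E))) i k
        = ∑ j, ∑ r : Fin n × Fin n, F (r.2, i) (r.1, k) * E (j, r.2) (j, r.1) := by
          simp [pTrace, psi, mul_apply]
      _ = ∑ r : Fin n × Fin n, F (r.2, i) (r.1, k) * ∑ j, E (j, r.2) (j, r.1) := by
          rw [Finset.sum_comm]
          simp [Finset.mul_sum]
      _ = ∑ r : Fin n × Fin n, (∑ t, star (D t (r.2, i)) * D t (r.1, k)) *
            (∑ s, star (C s r.2) * C s r.1) := by
          simp_rw [hG, hFe]
      _ = (Bᴴ * B) i k := by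
          simp only [mul_apply, conjTranspose_apply, hB, of_apply, star_sum, star_mul',
            Finset.sum_mul_sum]
          have hL : (∑ z : (Fin n × Fin n) × (Fin n × Fin n) × Fin n,
              star (D z.2.1 (z.1.2, i)) * D z.2.1 (z.1.1, k) *
                (star (C z.2.2 z.1.2) * C z.2.2 z.1.1))
              = ∑ x : Fin n × Fin n, ∑ t : Fin n × Fin n, ∑ s : Fin n,
                star (D t (x.2, i)) * D t (x.1, k) * (star (C s x.2) * C s x.1) := by
            rw [Fintype.sum_prod_type]
            exact Finset.sum_congr rfl fun x _ => by rw [Fintype.sum_prod_type]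
          have hR : (∑ z : (Fin n × Fin n × Fin n) × Fin n × Fin n,
              star (C z.1.1 z.2.1) * star (D z.1.2 (z.2.1, i)) *
                (C z.1.1 z.2.2 * D z.1.2 (z.2.2, k)))
              = ∑ x : Fin n × Fin n × Fin n, ∑ a : Fin n, ∑ b : Fin n,
                star (C x.1 a) * star (D x.2 (a, i)) * (C x.1 b * D x.2 (b, k)) := by
            rw [Fintype.sum_prod_type]
            exact Finset.sum_congr rfl fun x _ => by rw [Fintype.sum_prod_type]
          rw [← hL, ← hR]
          refine Fintype.sum_equiv
            ⟨fun z => ((z.2.2, z.2.1), (z.1.2, z.1.1)),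
             fun y => ((y.2.2, y.2.1), (y.1.2, y.1.1)),
             fun _ => rfl, fun _ => rfl⟩ _ _ fun z => ?_
          simp only [Equiv.coe_fn_mk]
          ring
  rw [key]
  exact posSemidef_conjTranspose_mul_self B
end

section
/- Let (X_1,…,X_d) ∈ M_n(ℂ)^d with ρ̂(X_1,…,X_d) < 1, and let P = ((1 − T)^{-1})^ψ be the elementary Pick matrix, where 1 denotes the identity of M_{n²}(ℂ). Then P is positive semidefinite, and P − Σ_{i=1}^d (I ⊗ X_i) P (I ⊗ X_i^*) = 1^ψ = (vec I)(vec I)^*, which is positive semidefinite (I is the identity of M_n(ℂ)). -/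
open scoped Kronecker
open scoped ComplexOrder
open Matrix

/-- The vectorization map: `vec(E_{i,j}) = e_{i+(j−1)n}`, i.e. in pair notation
`vec(A) (j, i) = A i j`. -/
def vecM {n : ℕ} (A : Matrix (Fin n) (Fin n) ℂ) : Fin n × Fin n → ℂ :=
  fun p => A p.2 p.1

/-! ### Auxiliary lemmas -/

section Aux

open Filter
open scoped NNReal ENNReal Topology

lemma psi_one' {n : ℕ} : psi (1 : Matrix (Fin n × Fin n) (Fin n × Fin n) ℂ) =
    Matrix.vecMulVec (vecM (1 : Matrix (Fin n) (Fin n) ℂ))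
      (star (vecM (1 : Matrix (Fin n) (Fin n) ℂ))) := by
  ext ⟨p1, p2⟩ ⟨q1, q2⟩
  simp only [psi, Matrix.of_apply, Matrix.one_apply, Matrix.vecMulVec_apply, vecM,
    Pi.star_apply, Prod.mk.injEq]
  by_cases h1 : p2 = p1 <;> by_cases h2 : q2 = q1 <;> simp [h1, h2]

lemma psd_vecMulVec {m : Type*} [Fintype m] (v : m → ℂ) :
    (Matrix.vecMulVec v (star v)).PosSemidef := by
  rw [Matrix.posSemidef_iff_dotProduct_mulVec]
  constructor
  · ext p q
    simp [Matrix.vecMulVec_apply, mul_comm]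
  · intro x
    have : dotProduct (star x) (Matrix.vecMulVec v (star v) *ᵥ x)
        = (star x ⬝ᵥ v) * star (star x ⬝ᵥ v) := by
      simp only [dotProduct, Matrix.mulVec, Matrix.vecMulVec_apply, Pi.star_apply,
        star_sum, star_mul', star_star]
      rw [Finset.sum_mul]
      congr 1; ext p
      rw [Finset.mul_sum, Finset.mul_sum]
      congr 1; ext q
      ring
    rw [this]
    exact mul_star_self_nonneg _

lemma psi_intertwine {n : ℕ} (A : Matrix (Fin n) (Fin n) ℂ)
    (M : Matrix (Fin n × Fin n) (Fin n × Fin n) ℂ) :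
    psi ((A.map (starRingEnd ℂ) ⊗ₖ A) * M) =
      (1 ⊗ₖ A) * psi M * (1 ⊗ₖ Aᴴ) := by
  ext ⟨p1, p2⟩ ⟨q1, q2⟩
  simp only [psi, Matrix.of_apply, Matrix.mul_apply, Matrix.kroneckerMap_apply,
    Fintype.sum_prod_type, Matrix.one_apply, Matrix.map_apply, Matrix.conjTranspose_apply,
    ite_mul, one_mul, zero_mul, mul_ite, mul_one, mul_zero, Finset.sum_ite_irrel,
    Finset.sum_const_zero, Finset.sum_ite_eq, Finset.sum_ite_eq', Finset.mem_univ, if_true,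
    Finset.sum_mul, Finset.mul_sum]
  exact Finset.sum_congr rfl fun a _ => Finset.sum_congr rfl fun b _ => by
    simp only [starRingEnd_apply]; ring

lemma psi_sub {n : ℕ} (M N : Matrix (Fin n × Fin n) (Fin n × Fin n) ℂ) :
    psi (M - N) = psi M - psi N := by
  ext p q; simp [psi]

lemma psi_sum {n : ℕ} {ι : Type*} (s : Finset ι)
    (f : ι → Matrix (Fin n × Fin n) (Fin n × Fin n) ℂ) :
    psi (∑ i ∈ s, f i) = ∑ i ∈ s, psi (f i) := by
  ext p q
  simp [psi, Matrix.sum_apply]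

/-- ψ as a linear map. -/
noncomputable def psiLM {n : ℕ} : Matrix (Fin n × Fin n) (Fin n × Fin n) ℂ →ₗ[ℂ]
    Matrix (Fin n × Fin n) (Fin n × Fin n) ℂ where
  toFun := psi
  map_add' M N := by ext p q; simp [psi]
  map_smul' c M := by ext p q; simp [psi]

/-- entry evaluation as a linear map. -/
noncomputable def entryLM {m : Type*} [Fintype m] (p q : m) : Matrix m m ℂ →ₗ[ℂ] ℂ where
  toFun M := M p q
  map_add' M N := rfl
  map_smul' c M := rfl

/-- quadratic-form evaluation as a linear map. -/
noncomputable def evLM {m : Type*} [Fintype m] (x : m → ℂ) : Matrix m m ℂ →ₗ[ℂ] ℂ where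
  toFun M := dotProduct (star x) (M *ᵥ x)
  map_add' M N := by simp [Matrix.add_mulVec, dotProduct_add]
  map_smul' c M := by simp [Matrix.smul_mulVec, dotProduct_smul]

lemma kron_ct {n : ℕ} (A B : Matrix (Fin n) (Fin n) ℂ) : (A ⊗ₖ B)ᴴ = Aᴴ ⊗ₖ Bᴴ := by
  ext ⟨p1, p2⟩ ⟨q1, q2⟩
  simp [Matrix.conjTranspose_apply, Matrix.kroneckerMap_apply, mul_comm]

lemma psd_psi_mul {n d : ℕ} (X : Fin d → Matrix (Fin n) (Fin n) ℂ)
    (M : Matrix (Fin n × Fin n) (Fin n × Fin n) ℂ) (hM : (psi M).PosSemidef) :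
    (psi (outerT X * M)).PosSemidef := by
  have key : psi (outerT X * M)
      = ∑ i, ((1 : Matrix (Fin n) (Fin n) ℂ) ⊗ₖ X i) * psi M * ((1 ⊗ₖ X i)ᴴ) := by
    rw [outerT, Finset.sum_mul, psi_sum]
    refine Finset.sum_congr rfl fun i _ => ?_
    rw [psi_intertwine, kron_ct, Matrix.conjTranspose_one]
  rw [key]
  refine Finset.sum_induction _ _ (fun a b ha hb => ha.add hb) Matrix.PosSemidef.zero ?_
  intro i _
  exact hM.mul_mul_conjTranspose_same _

/-- positive semidefiniteness of `ψ(T^k)` -/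
lemma psd_psi_pow {n d : ℕ} (X : Fin d → Matrix (Fin n) (Fin n) ℂ) (k : ℕ) :
    (psi (outerT X ^ k)).PosSemidef := by
  induction k with
  | zero =>
      rw [pow_zero, psi_one']
      exact psd_vecMulVec _
  | succ k ih =>
      rw [pow_succ']
      exact psd_psi_mul X _ ih

section Normed

attribute [local instance] Matrix.linftyOpNormedRing Matrix.linftyOpNormedAlgebra
  Matrix.linftyOpNormedAddCommGroup Matrix.linftyOpNormedSpace

variable {N : Type*} [Fintype N] [DecidableEq N] [Nonempty N]

lemma geom_facts (T : Matrix N N ℂ) (hT : ∀ z ∈ spectrum ℂ T, ‖z‖₊ < 1) :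
    ∃ S : Matrix N N ℂ, HasSum (fun k : ℕ => T ^ k) S ∧ (1 - T) * S = 1 ∧ S * (1 - T) = 1 := by
  have hc : CompleteSpace (Matrix N N ℂ) := FiniteDimensional.complete ℂ _
  have hsr : spectralRadius ℂ T < 1 := by
    simpa using spectrum.spectralRadius_lt_of_forall_lt T hT
  obtain ⟨r, hr1, hr2⟩ := exists_between hsr
  have hrtop : r ≠ ⊤ := (hr2.trans_le le_top).ne
  set c : ℝ≥0 := r.toNNReal with hc_def
  have hcr : (c : ENNReal) = r := ENNReal.coe_toNNReal hrtop
  have hc1 : c < 1 := by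
    rw [← ENNReal.coe_lt_one_iff, hcr]; exact hr2
  have gel := spectrum.pow_nnnorm_pow_one_div_tendsto_nhds_spectralRadius T
  have hev : ∀ᶠ k : ℕ in atTop, (‖T ^ k‖₊ : ENNReal) ^ (1 / (k : ℝ)) < r :=
    gel.eventually_lt_const hr1
  have hbound : ∀ᶠ k : ℕ in atTop, ‖T ^ k‖ ≤ (c : ℝ) ^ k := by
    filter_upwards [hev, eventually_ge_atTop 1] with k hk hk1
    have hk0 : (k : ℝ) ≠ 0 := Nat.cast_ne_zero.mpr (by omega)
    have h1 : ((‖T ^ k‖₊ : ENNReal) ^ (1 / (k : ℝ))) ^ (k : ℝ) < r ^ (k : ℝ) :=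
      ENNReal.rpow_lt_rpow hk (by positivity)
    rw [← ENNReal.rpow_mul, one_div, inv_mul_cancel₀ hk0, ENNReal.rpow_one, ← hcr,
      ← ENNReal.coe_rpow_of_nonneg _ (by positivity), ENNReal.coe_lt_coe] at h1
    have h2 : ‖T ^ k‖₊ ≤ c ^ k := by
      calc ‖T ^ k‖₊ ≤ c ^ (k : ℝ) := h1.le
      _ = c ^ k := by rw [NNReal.rpow_natCast]
    calc ‖T ^ k‖ = (‖T ^ k‖₊ : ℝ) := rfl
    _ ≤ ((c ^ k : ℝ≥0) : ℝ) := by exact_mod_cast h2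
    _ = (c : ℝ) ^ k := by push_cast; ring
  have hsum : Summable fun k : ℕ => T ^ k :=
    Summable.of_norm_bounded_eventually_nat
      (summable_geometric_of_lt_one c.2 hc1) hbound
  refine ⟨∑' k, T ^ k, hsum.hasSum, ?_, ?_⟩
  · have h1 : Tendsto (fun m : ℕ => (1 - T) * ∑ k ∈ Finset.range m, T ^ k) atTop
        (𝓝 ((1 - T) * ∑' k, T ^ k)) :=
      (hsum.hasSum.tendsto_sum_nat).const_mul _
    have h2 : Tendsto (fun m : ℕ => (1 - T) * ∑ k ∈ Finset.range m, T ^ k) atTop (𝓝 1) := by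
      simp only [mul_neg_geom_sum]
      simpa using tendsto_const_nhds.sub hsum.tendsto_atTop_zero
    exact tendsto_nhds_unique h1 h2
  · have h1 : Tendsto (fun m : ℕ => (∑ k ∈ Finset.range m, T ^ k) * (1 - T)) atTop
        (𝓝 ((∑' k, T ^ k) * (1 - T))) :=
      (hsum.hasSum.tendsto_sum_nat).mul_const _
    have h2 : Tendsto (fun m : ℕ => (∑ k ∈ Finset.range m, T ^ k) * (1 - T)) atTop (𝓝 1) := by
      simp only [geom_sum_mul_neg]
      simpa using tendsto_const_nhds.sub hsum.tendsto_atTop_zero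
    exact tendsto_nhds_unique h1 h2

/-- If a matrix is the sum of a series of PSD matrices, it is PSD. -/
lemma psd_of_hasSum {f : ℕ → Matrix N N ℂ} {S : Matrix N N ℂ}
    (hf : ∀ k, (f k).PosSemidef) (hS : HasSum f S) : S.PosSemidef := by
  rw [Matrix.posSemidef_iff_dotProduct_mulVec]
  constructor
  · ext p q
    have h1 : HasSum (fun k => f k p q) (S p q) :=
      hS.map ((entryLM p q).toAddMonoidHom) (entryLM p q).continuous_of_finiteDimensional
    have h2 : HasSum (fun k => star (f k q p)) (star (S q p)) :=
      (hS.map ((entryLM q p).toAddMonoidHom)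
        (entryLM q p).continuous_of_finiteDimensional).star
    have h3 : (fun k => star (f k q p)) = fun k => f k p q := by
      funext k
      have := congrFun (congrFun (hf k).1 p) q
      simpa [Matrix.conjTranspose_apply] using this
    rw [h3] at h2
    have := h2.unique h1
    simpa [Matrix.conjTranspose_apply] using this
  · intro x
    have hq : HasSum (fun k => dotProduct (star x) (f k *ᵥ x))
        (dotProduct (star x) (S *ᵥ x)) :=
      hS.map ((evLM x).toAddMonoidHom) (evLM x).continuous_of_finiteDimensional
    have hre : HasSum (fun k => (dotProduct (star x) (f k *ᵥ x)).re)
        ((dotProduct (star x) (S *ᵥ x)).re) :=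
      hq.map Complex.reAddGroupHom Complex.continuous_re
    have him : HasSum (fun k => (dotProduct (star x) (f k *ᵥ x)).im)
        ((dotProduct (star x) (S *ᵥ x)).im) :=
      hq.map Complex.imAddGroupHom Complex.continuous_im
    have hterm : ∀ k, 0 ≤ (dotProduct (star x) (f k *ᵥ x)).re ∧
        0 = (dotProduct (star x) (f k *ᵥ x)).im := by
      intro k
      exact Complex.nonneg_iff.mp ((hf k).dotProduct_mulVec_nonneg x)
    rw [Complex.nonneg_iff]
    constructor
    · exact hre.nonneg fun k => (hterm k).1
    · have him' : HasSum (fun _ : ℕ => (0 : ℝ))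
          ((dotProduct (star x) (S *ᵥ x)).im) := by
        convert him using 1
        funext k
        exact (hterm k).2
      exact (him'.unique hasSum_zero).symm

end Normed

end Aux

/-- if `ρ̂(X) < 1` then the elementary Pick matrix `P = ((1 − T)⁻¹)ᵠ` is
positive semidefinite, `P − Σᵢ (1 ⊗ Xᵢ) P (1 ⊗ Xᵢ^*) = 1ᵠ = (vec I)(vec I)^*`, and the
latter is positive semidefinite. -/
theorem stmt10 {n d : ℕ} (X : Fin d → Matrix (Fin n) (Fin n) ℂ) (h : osr X < 1) :
    (psi (1 - outerT X)⁻¹).PosSemidef ∧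
    (psi (1 - outerT X)⁻¹ -
        ∑ i, ((1 : Matrix (Fin n) (Fin n) ℂ) ⊗ₖ X i) * psi (1 - outerT X)⁻¹ *
          ((1 : Matrix (Fin n) (Fin n) ℂ) ⊗ₖ (X i)ᴴ)) =
      psi (1 : Matrix (Fin n × Fin n) (Fin n × Fin n) ℂ) ∧
    psi (1 : Matrix (Fin n × Fin n) (Fin n × Fin n) ℂ) =
      Matrix.vecMulVec (vecM (1 : Matrix (Fin n) (Fin n) ℂ))
        (star (vecM (1 : Matrix (Fin n) (Fin n) ℂ))) ∧
    (psi (1 : Matrix (Fin n × Fin n) (Fin n × Fin n) ℂ)).PosSemidef := by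
  rcases Nat.eq_zero_or_pos n with hn | hn
  · -- trivial case `n = 0`
    subst hn
    have hall : ∀ M M' : Matrix (Fin 0 × Fin 0) (Fin 0 × Fin 0) ℂ, M = M' := by
      intro M M'
      ext ⟨i, j⟩ q
      exact i.elim0
    have hpsd : ∀ M : Matrix (Fin 0 × Fin 0) (Fin 0 × Fin 0) ℂ, M.PosSemidef := by
      intro M
      rw [Matrix.posSemidef_iff_dotProduct_mulVec]
      constructor
      · exact hall _ _
      · intro x
        have : dotProduct (star x) (M *ᵥ x) = 0 := by
          simp [dotProduct]
        rw [this]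
    exact ⟨hpsd _, hall _ _, hall _ _, hpsd _⟩
  · have : Nonempty (Fin n) := ⟨⟨0, hn⟩⟩
    -- spectrum condition
    have hspec : ∀ z ∈ spectrum ℂ (outerT X), ‖z‖₊ < 1 := by
      intro z hz
      have hfin : (spectrum ℂ (outerT X)).Finite := Matrix.finite_spectrum _
      have hb : BddAbove ((fun z : ℂ => ‖z‖) '' spectrum ℂ (outerT X)) := (hfin.image _).bddAbove
      have h1 : ‖z‖ ≤ specRad (outerT X) := le_csSup hb ⟨z, hz, rfl⟩
      have h0 : 0 ≤ specRad (outerT X) := by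
        apply Real.sSup_nonneg
        rintro y ⟨w, _, rfl⟩
        exact norm_nonneg w
      have h2 : specRad (outerT X) < 1 := by
        unfold osr at h
        nlinarith [Real.sq_sqrt h0, Real.sqrt_nonneg (specRad (outerT X))]
      have : ‖z‖ < 1 := by
        exact lt_of_le_of_lt h1 h2
      exact this
    obtain ⟨S, hS, hS1, hS2⟩ := geom_facts (outerT X) hspec
    have hinv : (1 - outerT X)⁻¹ = S := Matrix.inv_eq_right_inv hS1
    have hpsiS : HasSum (fun k : ℕ => psi (outerT X ^ k)) (psi S) := by
      have := hS.map (psiLM.toAddMonoidHom) psiLM.continuous_of_finiteDimensional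
      simpa [Function.comp_def, psiLM] using this
    refine ⟨?_, ?_, psi_one', psi_one' ▸ psd_vecMulVec _⟩
    · rw [hinv]
      exact psd_of_hasSum (psd_psi_pow X) hpsiS
    · rw [hinv]
      have e1 : ∀ i : Fin d,
          ((1 : Matrix (Fin n) (Fin n) ℂ) ⊗ₖ X i) * psi S *
              ((1 : Matrix (Fin n) (Fin n) ℂ) ⊗ₖ (X i)ᴴ)
            = psi (((X i).map (starRingEnd ℂ) ⊗ₖ X i) * S) :=
        fun i => (psi_intertwine _ _).symm
      calc psi S - ∑ i, ((1 : Matrix (Fin n) (Fin n) ℂ) ⊗ₖ X i) * psi S *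
              ((1 : Matrix (Fin n) (Fin n) ℂ) ⊗ₖ (X i)ᴴ)
          = psi S - ∑ i, psi (((X i).map (starRingEnd ℂ) ⊗ₖ X i) * S) := by
            rw [Finset.sum_congr rfl fun i _ => e1 i]
        _ = psi (S - (∑ i, ((X i).map (starRingEnd ℂ) ⊗ₖ X i) * S)) := by
            rw [psi_sub, psi_sum]
        _ = psi ((1 - outerT X) * S) := by
            rw [← Finset.sum_mul, sub_mul, one_mul, outerT]
        _ = psi 1 := by rw [hS1]
end

section
/- Let (X_1,…,X_d) ∈ M_n(ℂ)^d with ρ̂(X_1,…,X_d) < 1, let P = ((1 − T)^{-1})^ψ be the elementary Pick matrix, and set L = Q(P). Then L is positive definite and L − Σ_{i=1}^d X_i L X_i^* = I, the identity of M_n(ℂ). -/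
open scoped Kronecker
open scoped ComplexOrder
open scoped ENNReal NNReal Topology
open Matrix Filter

namespace Stmt11Aux

/-- `Q ∘ ψ` as a linear map. -/
noncomputable def Fmap (n : ℕ) :
    Matrix (Fin n × Fin n) (Fin n × Fin n) ℂ →ₗ[ℂ] Matrix (Fin n) (Fin n) ℂ where
  toFun N := pTrace (psi N)
  map_add' M N := by
    ext i k
    simp [pTrace, psi, Finset.sum_add_distrib]
  map_smul' c N := by
    ext i k
    simp [pTrace, psi, Finset.mul_sum]

lemma Fmap_apply {n : ℕ} (N : Matrix (Fin n × Fin n) (Fin n × Fin n) ℂ) :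
    Fmap n N = pTrace (psi N) := rfl

lemma Fmap_one {n : ℕ} : Fmap n (1 : Matrix (Fin n × Fin n) (Fin n × Fin n) ℂ) = 1 := by
  ext i k
  simp only [Fmap, LinearMap.coe_mk, AddHom.coe_mk, pTrace, psi, Matrix.of_apply,
    Matrix.one_apply, Prod.mk.injEq]
  by_cases h : i = k
  · subst h
    simp
  · simp [h, fun j => show ¬(k = j ∧ i = j) from fun ⟨h1, h2⟩ => h (h2.trans h1.symm)]

lemma key_mulT {n d : ℕ} (X : Fin d → Matrix (Fin n) (Fin n) ℂ)
    (N : Matrix (Fin n × Fin n) (Fin n × Fin n) ℂ) :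
    pTrace (psi (outerT X * N)) = ∑ t, X t * pTrace (psi N) * (X t)ᴴ := by
  ext i k
  simp only [pTrace, psi, Matrix.of_apply,
    Matrix.sum_apply, Matrix.mul_apply, outerT, kroneckerMap_apply, Matrix.map_apply,
    conjTranspose_apply, starRingEnd_apply, Finset.sum_mul, Finset.mul_sum,
    Fintype.sum_prod_type]
  conv_lhs => enter [2,j,2,a]; rw [Finset.sum_comm]
  conv_lhs => enter [2,j]; rw [Finset.sum_comm]
  rw [Finset.sum_comm]
  conv_lhs => enter [2,t]; rw [Finset.sum_comm]
  conv_lhs => enter [2,t,2,a]; rw [Finset.sum_comm]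
  exact Finset.sum_congr rfl fun t _ => Finset.sum_congr rfl fun a _ =>
    Finset.sum_congr rfl fun b _ => Finset.sum_congr rfl fun j _ => by ring

lemma Fmap_mulT {n d : ℕ} (X : Fin d → Matrix (Fin n) (Fin n) ℂ)
    (N : Matrix (Fin n × Fin n) (Fin n × Fin n) ℂ) :
    Fmap n (outerT X * N) = ∑ t, X t * Fmap n N * (X t)ᴴ :=
  key_mulT X N

lemma posSemidef_sum {m : Type*} [Fintype m] {ι : Type*} (s : Finset ι)
    (f : ι → Matrix m m ℂ) (h : ∀ i ∈ s, (f i).PosSemidef) :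
    (∑ i ∈ s, f i).PosSemidef := by
  classical
  induction s using Finset.induction_on with
  | empty => simpa using Matrix.PosSemidef.zero
  | insert _ _ ha ih =>
    rw [Finset.sum_insert ha]
    exact ((h _ (Finset.mem_insert_self _ _)).add
      (ih fun i hi => h i (Finset.mem_insert_of_mem hi)))

/-- the quadratic form `N ↦ x* N x` as a linear map. -/
noncomputable def qform {m : Type*} [Fintype m] (x : m → ℂ) :
    Matrix m m ℂ →ₗ[ℂ] ℂ where
  toFun N := star x ⬝ᵥ (N *ᵥ x)
  map_add' M N := by simp [Matrix.add_mulVec, dotProduct_add]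
  map_smul' c N := by simp [Matrix.smul_mulVec, dotProduct_smul]

lemma posSemidef_tsum {m : Type*} [Fintype m] [DecidableEq m] {f : ℕ → Matrix m m ℂ}
    (hf : Summable f) (h : ∀ k, (f k).PosSemidef) : (∑' k, f k).PosSemidef := by
  rw [Matrix.posSemidef_iff_dotProduct_mulVec]
  constructor
  · have h1 := hf.hasSum.matrix_conjTranspose
    simp only [fun k => (h k).1.eq] at h1
    exact h1.unique hf.hasSum
  · intro x
    have hq : HasSum (fun k => qform x (f k)) (qform x (∑' k, f k)) :=
      hf.hasSum.map (qform x).toAddMonoidHom (qform x).continuous_of_finiteDimensional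
    have hre : HasSum (fun k => (qform x (f k)).re) ((qform x (∑' k, f k)).re) :=
      Complex.reCLM.hasSum hq
    have him : HasSum (fun k => (qform x (f k)).im) ((qform x (∑' k, f k)).im) :=
      Complex.imCLM.hasSum hq
    have hk : ∀ k, 0 ≤ (qform x (f k)).re ∧ (qform x (f k)).im = 0 := by
      intro k
      have := (h k).dotProduct_mulVec_nonneg x
      rw [Complex.le_def] at this
      exact ⟨by simpa [qform] using this.1, by simpa [qform] using this.2.symm⟩
    have him0 : (qform x (∑' k, f k)).im = 0 := by
      have : HasSum (fun k => (qform x (f k)).im) 0 := by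
        simpa [fun k => (hk k).2] using (hasSum_zero : HasSum (fun _ : ℕ => (0 : ℝ)) 0)
      exact him.unique this
    have hre0 : 0 ≤ (qform x (∑' k, f k)).re := by
      rw [← hre.tsum_eq]
      exact tsum_nonneg fun k => (hk k).1
    show (0 : ℂ) ≤ star x ⬝ᵥ ((∑' k, f k) *ᵥ x)
    rw [Complex.le_def]
    exact ⟨by simpa [qform] using hre0, by simpa [qform] using him0.symm⟩

end Stmt11Aux

open Stmt11Aux

set_option maxHeartbeats 2000000 in
/-- if `ρ̂(X) < 1` and `P = ((1 − T)⁻¹)ᵠ` is the elementary Pick matrix, then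
`L = Q(P)` is positive definite and `L − Σᵢ Xᵢ L Xᵢ^* = I`. -/
theorem stmt11 {n d : ℕ} (X : Fin d → Matrix (Fin n) (Fin n) ℂ) (h : osr X < 1) :
    (pTrace (psi (1 - outerT X)⁻¹)).PosDef ∧
    (pTrace (psi (1 - outerT X)⁻¹) -
        ∑ i, X i * pTrace (psi (1 - outerT X)⁻¹) * (X i)ᴴ) = 1 := by
  classical
  letI : NormedRing (Matrix (Fin n × Fin n) (Fin n × Fin n) ℂ) := Matrix.linftyOpNormedRing
  letI : NormedAlgebra ℂ (Matrix (Fin n × Fin n) (Fin n × Fin n) ℂ) :=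
    Matrix.linftyOpNormedAlgebra
  letI : CompleteSpace (Matrix (Fin n × Fin n) (Fin n × Fin n) ℂ) :=
    FiniteDimensional.complete ℂ _
  set T := outerT X with hT
  -- `specRad T < 1`
  have hs : specRad T < 1 := by
    by_contra hc
    push_neg at hc
    have h1 : (1 : ℝ) ≤ osr X := by
      rw [osr, ← Real.sqrt_one]
      exact Real.sqrt_le_sqrt hc
    linarith
  have hbdd : ∀ z ∈ spectrum ℂ T, ‖z‖ ≤ specRad T := fun z hz =>
    le_csSup ((T.finite_spectrum.image _).bddAbove) ⟨z, hz, rfl⟩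
  -- spectral radius (Banach-algebra sense) is `< 1`
  have hρ : spectralRadius ℂ T < 1 := by
    rcases lt_or_ge (specRad T) 0 with h0 | h0
    · have hemp : spectrum ℂ T = ∅ := by
        by_contra hne
        obtain ⟨z, hz⟩ := Set.nonempty_iff_ne_empty.mpr hne
        have := hbdd z hz
        have := norm_nonneg z
        linarith
      rw [spectralRadius]
      simp [hemp]
    · calc spectralRadius ℂ T ≤ ENNReal.ofReal (specRad T) := by
            rw [spectralRadius]
            refine iSup₂_le fun z hz => ?_
            rw [← ENNReal.ofReal_coe_nnreal, coe_nnnorm]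
            exact ENNReal.ofReal_le_ofReal (by simpa using hbdd z hz)
        _ < 1 := by
            rw [← ENNReal.ofReal_one]
            exact ENNReal.ofReal_lt_ofReal_iff_of_nonneg h0 |>.mpr hs
  obtain ⟨r, hr1, hr2⟩ := ENNReal.lt_iff_exists_nnreal_btwn.mp hρ
  have hrlt : (r : ℝ) < 1 := by exact_mod_cast hr2
  -- Gelfand's formula gives geometric decay of `‖T ^ k‖`
  have hg := spectrum.pow_nnnorm_pow_one_div_tendsto_nhds_spectralRadius T
  have hev : ∀ᶠ k : ℕ in Filter.atTop, (‖T ^ k‖₊ : ℝ≥0∞) ^ ((1 : ℝ) / (k : ℝ)) < (r : ℝ≥0∞) :=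
    hg.eventually_lt_const hr1
  have hbound : ∀ᶠ k in Filter.atTop, ‖T ^ k‖ ≤ (r : ℝ) ^ k := by
    filter_upwards [hev, Filter.eventually_ge_atTop 1] with k hk hk1
    have hk0 : (k : ℝ) ≠ 0 := Nat.cast_ne_zero.mpr (by omega)
    have h2 : ((‖T ^ k‖₊ : ℝ≥0∞) ^ ((1 : ℝ) / (k : ℝ))) ^ (k : ℝ) ≤ (r : ℝ≥0∞) ^ (k : ℝ) :=
      ENNReal.rpow_le_rpow hk.le (by positivity)
    rw [← ENNReal.rpow_mul, one_div, inv_mul_cancel₀ hk0, ENNReal.rpow_one] at h2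
    rw [ENNReal.rpow_natCast] at h2
    have h3 : ‖T ^ k‖₊ ≤ r ^ k := by exact_mod_cast h2
    exact_mod_cast h3
  have hsum : Summable (fun k => T ^ k) :=
    Summable.of_norm_bounded_eventually_nat
      (summable_geometric_of_lt_one r.coe_nonneg hrlt) hbound
  set S := ∑' k, T ^ k with hS
  have hhs : HasSum (fun k => T ^ k) S := hsum.hasSum
  have hpow0 : Filter.Tendsto (fun k => T ^ k) Filter.atTop (𝓝 0) :=
    hsum.tendsto_atTop_zero
  have hmul : S * (1 - T) = 1 := by
    have h1 : Filter.Tendsto (fun N => (∑ i ∈ Finset.range N, T ^ i) * (1 - T))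
        Filter.atTop (𝓝 (S * (1 - T))) := (hhs.tendsto_sum_nat).mul tendsto_const_nhds
    have h2 : ∀ N, (∑ i ∈ Finset.range N, T ^ i) * (1 - T) = 1 - T ^ N := by
      intro N
      calc (∑ i ∈ Finset.range N, T ^ i) * (1 - T)
          = -((∑ i ∈ Finset.range N, T ^ i) * (T - 1)) := by rw [← mul_neg, neg_sub]
        _ = -(T ^ N - 1) := by rw [geom_sum_mul]
        _ = 1 - T ^ N := neg_sub _ _
    rw [funext h2] at h1
    have h3 : Filter.Tendsto (fun N : ℕ => 1 - T ^ N) Filter.atTop (𝓝 (1 - 0)) :=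
      tendsto_const_nhds.sub hpow0
    rw [sub_zero] at h3
    exact tendsto_nhds_unique h1 h3
  have hinv : (1 - T)⁻¹ = S := Matrix.inv_eq_left_inv hmul
  have hmul' : (1 - T) * (1 - T)⁻¹ = 1 := by
    rw [hinv]; exact mul_eq_one_comm.mp hmul
  -- the sequence `L k = Fmap (T ^ k)` of positive semidefinite matrices
  have hLsum : HasSum (fun k => Fmap n (T ^ k)) (Fmap n S) :=
    hhs.map (Fmap n).toAddMonoidHom (Fmap n).continuous_of_finiteDimensional
  have hpsd : ∀ k, (Fmap n (T ^ k)).PosSemidef := by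
    intro k
    induction k with
    | zero => rw [pow_zero, Fmap_one]; exact Matrix.PosDef.one.posSemidef
    | succ k ih =>
      rw [pow_succ', Fmap_mulT]
      exact posSemidef_sum _ _ fun t _ => ih.mul_mul_conjTranspose_same (X t)
  -- split off the `k = 0` term
  have hsplit : Fmap n S = 1 + ∑' k, Fmap n (T ^ (k + 1)) := by
    rw [← hLsum.tsum_eq, hLsum.summable.tsum_eq_zero_add, pow_zero, Fmap_one]
  have htail : (∑' k, Fmap n (T ^ (k + 1))).PosSemidef :=
    posSemidef_tsum ((summable_nat_add_iff 1).mpr hLsum.summable) fun k => hpsd (k + 1)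
  have hPD : (Fmap n ((1 - T)⁻¹)).PosDef := by
    rw [hinv, hsplit]
    exact Matrix.PosDef.one.add_posSemidef htail
  -- the Stein identity
  have hid : Fmap n ((1 - T)⁻¹) - ∑ t, X t * Fmap n ((1 - T)⁻¹) * (X t)ᴴ = 1 := by
    rw [← Fmap_mulT, ← map_sub]
    have hstein : (1 - T)⁻¹ - T * (1 - T)⁻¹ = 1 := by
      calc (1 - T)⁻¹ - T * (1 - T)⁻¹ = (1 - T) * (1 - T)⁻¹ := by rw [sub_mul, one_mul]
        _ = 1 := hmul'
    rw [hstein, Fmap_one]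
  exact ⟨hPD, hid⟩
end

section
/- Let (X_1,…,X_d) ∈ M_n(ℂ)^d and let T = Σ_{i=1}^d conj(X_i) ⊗ X_i ∈ M_{n²}(ℂ). Then there is a real nonnegative eigenvalue λ of T, with degeneracy index η, such that every eigenvalue λ' of T with degeneracy index η' satisfies either (λ = |λ'| and η ≥ η') or λ > |λ'|. In particular λ = ρ(T) and λ has maximal degeneracy index among all eigenvalues of T of modulus ρ(T). -/
open scoped Kronecker

/-- The degeneracy index of `μ` for `T`: the least `r ≥ 1` with
`ker (T − μ)^r = ker (T − μ)^(r+1)` (the maximal size of a Jordan block for `μ`). -/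
noncomputable def degIdx {m : Type*} [Fintype m] [DecidableEq m]
    (T : Matrix m m ℂ) (μ : ℂ) : ℕ :=
  sInf { r : ℕ | 1 ≤ r ∧
    LinearMap.ker (Matrix.mulVecLin ((T - μ • 1) ^ r)) =
      LinearMap.ker (Matrix.mulVecLin ((T - μ • 1) ^ (r + 1))) }

open Finset Filter Topology Module Matrix

namespace Stmt13

section Analysis


lemma choose_ratio_nat {j mm k : ℕ} (hj : j < mm) (hk : 2 * mm ≤ k) :
    k.choose j * k ≤ (mm.factorial * 2 ^ mm) * k.choose mm := by
  have h1 : k.choose j * k ≤ k ^ j * k := by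
    exact Nat.mul_le_mul_right k (Nat.choose_le_pow k j)
  have h2 : k ^ j * k ≤ k ^ mm := by
    rw [← pow_succ]
    exact Nat.pow_le_pow_right (by omega) (by omega)
  have h3 : k ^ mm ≤ 2 ^ mm * (k + 1 - mm) ^ mm := by
    rw [← mul_pow]
    exact Nat.pow_le_pow_left (by omega) mm
  have h4 : (k + 1 - mm) ^ mm ≤ k.descFactorial mm := Nat.pow_sub_le_descFactorial k mm
  have h5 : k.descFactorial mm = mm.factorial * k.choose mm :=
    Nat.descFactorial_eq_factorial_mul_choose k mm
  calc k.choose j * k ≤ k ^ mm := h1.trans h2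
    _ ≤ 2 ^ mm * (k + 1 - mm) ^ mm := h3
    _ ≤ 2 ^ mm * (mm.factorial * k.choose mm) := by
        rw [← h5]; exact Nat.mul_le_mul_left _ h4
    _ = (mm.factorial * 2 ^ mm) * k.choose mm := by ring

lemma choose_ratio_tendsto {j mm : ℕ} (hj : j < mm) :
    Tendsto (fun k : ℕ => (k.choose j : ℝ) / (k.choose mm)) atTop (𝓝 0) := by
  have hC : Tendsto (fun k : ℕ => ((mm.factorial * 2 ^ mm : ℕ) : ℝ) / k) atTop (𝓝 0) :=
    tendsto_const_div_atTop_nhds_zero_nat _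
  refine squeeze_zero_norm' ?_ hC
  filter_upwards [eventually_ge_atTop (2 * mm + 1)] with k hk
  have hk0 : 0 < k := by omega
  have hch : 0 < k.choose mm := Nat.choose_pos (by omega)
  rw [Real.norm_eq_abs, abs_div, abs_of_nonneg (by positivity), abs_of_nonneg (by positivity)]
  rw [div_le_div_iff₀ (by exact_mod_cast hch) (by exact_mod_cast hk0)]
  exact_mod_cast choose_ratio_nat hj (by omega)

lemma cesaro_bounded (u : ℕ → ℂ) (C : ℝ) (hC : ∀ N : ℕ, ‖∑ k ∈ range N, u k‖ ≤ C) :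
    Tendsto (fun N : ℕ => (N : ℝ)⁻¹ • ∑ k ∈ range N, u k) atTop (𝓝 0) := by
  have hC0 : Tendsto (fun N : ℕ => C / N) atTop (𝓝 0) :=
    tendsto_const_div_atTop_nhds_zero_nat C
  refine squeeze_zero_norm (fun N => ?_) hC0
  rw [norm_smul, Real.norm_eq_abs, abs_of_nonneg (by positivity), div_eq_inv_mul]
  rcases Nat.eq_zero_or_pos N with h | h
  · subst h; simp
  · exact mul_le_mul_of_nonneg_left (hC N) (by positivity)

/-- The key per-term Cesàro vanishing lemma. -/
lemma term_cesaro {ρ : ℝ} (hρ : 0 < ρ) (η' : ℕ) {μ : ℂ} {j : ℕ} (b : ℂ)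
    (hcase : ‖μ‖ < ρ ∨ (‖μ‖ = ρ ∧ j < η')
      ∨ (‖μ‖ = ρ ∧ j = η' ∧ μ ≠ (ρ : ℂ))) :
    Tendsto (fun N : ℕ => (N : ℝ)⁻¹ • ∑ k ∈ range N,
      ((k.choose j : ℂ) * μ ^ (k - j) * b) / ((k.choose η' : ℂ) * (ρ : ℂ) ^ (k - η')))
      atTop (𝓝 0) := by
  set u : ℕ → ℂ := fun k =>
    ((k.choose j : ℂ) * μ ^ (k - j) * b) / ((k.choose η' : ℂ) * (ρ : ℂ) ^ (k - η')) with hu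
  rcases hcase with hlt | ⟨habs, hj⟩ | ⟨habs, hj, hne⟩
  · -- |μ| < ρ : the sequence itself tends to 0
    rcases eq_or_ne μ 0 with rfl | hμ0
    · refine Filter.Tendsto.cesaro_smul ?_
      refine tendsto_const_nhds.congr' ?_
      filter_upwards [eventually_ge_atTop (j + 1)] with k hk
      have : k - j ≠ 0 := by omega
      simp [hu, zero_pow this]
    · refine Filter.Tendsto.cesaro_smul ?_
      have habs0 : 0 < ‖μ‖ := by
        simpa [norm_pos_iff] using hμ0
      set x : ℝ := ‖μ‖ / ρ with hx
      have hx0 : 0 ≤ x := by positivity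
      have hx1 : x < 1 := by rw [hx, div_lt_one hρ]; exact hlt
      have hlim : Tendsto (fun k : ℕ => ((k : ℝ) ^ j * x ^ k) *
          (‖b‖ * ρ ^ η' / ‖μ‖ ^ j)) atTop (𝓝 0) := by
        have := tendsto_pow_const_mul_const_pow_of_lt_one j hx0 hx1
        simpa using this.mul_const _
      refine squeeze_zero_norm' ?_ hlim
      filter_upwards [eventually_ge_atTop (j + η' + 1)] with k hk
      have hkj : j ≤ k := by omega
      have hkη : η' ≤ k := by omega
      have hch : (1 : ℝ) ≤ (k.choose η' : ℝ) := by
        exact_mod_cast Nat.one_le_iff_ne_zero.mpr (Nat.choose_pos hkη).ne'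
      rw [norm_div, norm_mul, norm_mul, norm_mul]
      simp only [Complex.norm_natCast, norm_pow, Complex.norm_real, Real.norm_eq_abs]
      have hρabs : |ρ| = ρ := abs_of_pos hρ
      rw [hρabs]
      have hd0 : (0:ℝ) < (k.choose η' : ℝ) * ρ ^ (k - η') := by positivity
      rw [div_le_iff₀ hd0]
      have e1 : ‖μ‖ ^ (k - j) = ‖μ‖ ^ k / ‖μ‖ ^ j :=
        pow_sub₀ _ habs0.ne' hkj
      have e2 : ρ ^ (k - η') = ρ ^ k / ρ ^ η' := pow_sub₀ _ hρ.ne' hkη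
      have hchj : (k.choose j : ℝ) ≤ (k : ℝ) ^ j := by
        exact_mod_cast Nat.choose_le_pow k j
      have habsb : ‖b‖ = ‖b‖ := rfl
      calc (k.choose j : ℝ) * ‖μ‖ ^ (k - j) * ‖b‖
          ≤ (k : ℝ) ^ j * ‖μ‖ ^ (k - j) * ‖b‖ := by gcongr
        _ = ((k : ℝ) ^ j * x ^ k * (‖b‖ * ρ ^ η' / ‖μ‖ ^ j)) * (1 * ρ ^ (k - η')) := by
            rw [habsb, e1, e2, hx, div_pow]
            field_simp
        _ ≤ ((k : ℝ) ^ j * x ^ k * (‖b‖ * ρ ^ η' / ‖μ‖ ^ j)) *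
              ((k.choose η' : ℝ) * ρ ^ (k - η')) := by
            have hn : (0:ℝ) ≤ (k : ℝ) ^ j * x ^ k * (‖b‖ * ρ ^ η' / ‖μ‖ ^ j) := by
              positivity
            gcongr
  · -- |μ| = ρ, j < η'
    refine Filter.Tendsto.cesaro_smul ?_
    have hlim : Tendsto (fun k : ℕ => ((k.choose j : ℝ) / (k.choose η')) * (ρ ^ (η' - j) * ‖b‖))
        atTop (𝓝 0) := by
      simpa using (choose_ratio_tendsto hj).mul_const _
    refine squeeze_zero_norm' ?_ hlim
    filter_upwards [eventually_ge_atTop (η' + 1)] with k hk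
    have hkη : η' ≤ k := by omega
    have hkj : j ≤ k := by omega
    have hch : (0:ℝ) < (k.choose η' : ℝ) := by exact_mod_cast Nat.choose_pos hkη
    rw [norm_div, norm_mul, norm_mul, norm_mul]
    simp only [Complex.norm_natCast, norm_pow, Complex.norm_real, Real.norm_eq_abs]
    rw [habs, abs_of_pos hρ]
    have e3 : ρ ^ (k - j) = ρ ^ (k - η') * ρ ^ (η' - j) := by
      rw [← pow_add]
      congr 1
      omega
    rw [e3]
    rw [div_le_iff₀ (by positivity)]
    refine le_of_eq ?_
    field_simp
  · -- |μ| = ρ, j = η', μ ≠ ρ : bounded partial sums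
    subst hj
    set ω : ℂ := μ / (ρ : ℂ) with hω
    have hρC : (ρ : ℂ) ≠ 0 := by exact_mod_cast hρ.ne'
    have hω1 : ω ≠ 1 := by
      intro h
      apply hne
      rw [hω, div_eq_one_iff_eq hρC] at h
      exact h
    have hωabs : ‖ω‖ = 1 := by
      rw [hω, norm_div, habs, Complex.norm_real, Real.norm_eq_abs, abs_of_pos hρ, div_self hρ.ne']
    have hval : ∀ k, j ≤ k → u k = b * ω ^ (k - j) := by
      intro k hk
      have hch : ((k.choose j : ℕ) : ℂ) ≠ 0 := by
        exact_mod_cast (Nat.cast_ne_zero (R := ℂ)).mpr (Nat.choose_pos hk).ne'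
      have hωp : ω ^ (k - j) = μ ^ (k - j) / (ρ : ℂ) ^ (k - j) := by rw [hω, div_pow]
      have hρp : ((ρ : ℂ)) ^ (k - j) ≠ 0 := pow_ne_zero _ hρC
      rw [hu, hωp]
      field_simp
    refine cesaro_bounded u (2 * ‖b‖ / ‖ω - 1‖ + (j : ℝ) * ‖b‖) ?_
    intro N
    have hsplit : ∑ k ∈ range N, u k =
        (∑ k ∈ range (min j N), u k) + b * ∑ l ∈ range (N - j), ω ^ l := by
      rcases le_or_gt N j with h | h
      · rw [min_eq_right h, Nat.sub_eq_zero_of_le h]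
        simp
      · rw [min_eq_left h.le]
        rw [← Finset.sum_range_add_sum_Ico u h.le]
        congr 1
        rw [Finset.sum_Ico_eq_sum_range]
        rw [Finset.mul_sum]
        refine Finset.sum_congr rfl fun l hl => ?_
        rw [hval (j + l) (by omega)]
        congr 2
        omega
    rw [hsplit]
    refine (norm_add_le _ _).trans ?_
    have h1 : ‖∑ k ∈ range (min j N), u k‖ ≤ (j : ℝ) * ‖b‖ := by
      refine (norm_sum_le _ _).trans ?_
      have : ∀ k ∈ range (min j N), ‖u k‖ ≤ ‖b‖ := by
        intro k hk
        rw [Finset.mem_range] at hk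
        rcases le_or_gt j k with h | h
        · rw [hval k h, norm_mul]
          have : ‖ω ^ (k - j)‖ = 1 := by
            rw [norm_pow, hωabs, one_pow]
          rw [this, mul_one]
        ·
          have : k.choose j = 0 := Nat.choose_eq_zero_of_lt h
          rw [hu]
          simp [this]
      refine (Finset.sum_le_sum this).trans ?_
      rw [Finset.sum_const, Finset.card_range]
      rw [nsmul_eq_mul]
      have hmin : (min j N : ℝ) ≤ (j : ℝ) := by exact_mod_cast min_le_left j N
      push_cast at hmin ⊢
      exact mul_le_mul_of_nonneg_right hmin (norm_nonneg b)
    have h2 : ‖b * ∑ l ∈ range (N - j), ω ^ l‖ ≤ 2 * ‖b‖ / ‖ω - 1‖ := by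
      have hd : (0:ℝ) < ‖ω - 1‖ := norm_pos_iff.mpr (sub_ne_zero.mpr hω1)
      have hnum : ‖ω ^ (N - j) - 1‖ ≤ 2 := by
        refine (norm_sub_le _ _).trans ?_
        rw [norm_pow, hωabs, one_pow, norm_one]
        norm_num
      rw [norm_mul, geom_sum_eq hω1, norm_div]
      calc ‖b‖ * (‖ω ^ (N - j) - 1‖ / ‖ω - 1‖)
          ≤ ‖b‖ * (2 / ‖ω - 1‖) := by gcongr
        _ = 2 * ‖b‖ / ‖ω - 1‖ := by ring
    linarith


lemma term_tendsto_zero {ρ : ℝ} (hρ : 0 < ρ) {μ : ℂ} (habs : ‖μ‖ = ρ)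
    {j η' : ℕ} (hj : j < η') (b : ℂ) :
    Tendsto (fun k : ℕ =>
      ((k.choose j : ℂ) * μ ^ (k - j) * b) / ((k.choose η' : ℂ) * μ ^ (k - η')))
      atTop (𝓝 0) := by
  have hlim : Tendsto (fun k : ℕ => ((k.choose j : ℝ) / (k.choose η')) * (ρ ^ (η' - j) * ‖b‖))
      atTop (𝓝 0) := by
    simpa using (choose_ratio_tendsto hj).mul_const _
  refine squeeze_zero_norm' ?_ hlim
  filter_upwards [eventually_ge_atTop (η' + 1)] with k hk
  have hkη : η' ≤ k := by omega
  have hkj : j ≤ k := by omega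
  have hch : (0:ℝ) < (k.choose η' : ℝ) := by exact_mod_cast Nat.choose_pos hkη
  rw [norm_div, norm_mul, norm_mul, norm_mul]
  simp only [Complex.norm_natCast, norm_pow]
  rw [habs]
  have e3 : ρ ^ (k - j) = ρ ^ (k - η') * ρ ^ (η' - j) := by
    rw [← pow_add]
    congr 1
    omega
  rw [e3, div_le_iff₀ (by positivity)]
  refine le_of_eq ?_
  field_simp

end Analysis

section PartII
variable {m : Type*} [Fintype m] [DecidableEq m]

variable {m : Type*} [Fintype m] [DecidableEq m]

noncomputable def EndOf (A : Matrix m m ℂ) : Module.End ℂ (m → ℂ) := Matrix.toLinAlgEquiv' A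

lemma endOf_apply (A : Matrix m m ℂ) (v : m → ℂ) : EndOf A v = A *ᵥ v := rfl

lemma endOf_eq (A : Matrix m m ℂ) : EndOf A = A.mulVecLin :=
  LinearMap.ext fun v => rfl

lemma spectrum_endOf (A : Matrix m m ℂ) : spectrum ℂ (EndOf A) = spectrum ℂ A :=
  AlgEquiv.spectrum_eq _ _

lemma endOf_sub_smul_pow (T : Matrix m m ℂ) (μ : ℂ) (r : ℕ) :
    EndOf ((T - μ • 1) ^ r) = (EndOf T - μ • 1) ^ r := by
  unfold EndOf
  rw [map_pow, map_sub, _root_.map_smul, _root_.map_one]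

lemma ker_pow_eq (T : Matrix m m ℂ) (μ : ℂ) (r : ℕ) :
    LinearMap.ker (Matrix.mulVecLin ((T - μ • 1) ^ r)) =
      LinearMap.ker ((EndOf T - μ • 1) ^ r) := by
  rw [← endOf_eq, endOf_sub_smul_pow]

lemma degIdx_eq (T : Matrix m m ℂ) (μ : ℂ) :
    degIdx T μ = sInf { r : ℕ | 1 ≤ r ∧
      LinearMap.ker ((EndOf T - μ • 1) ^ r) = LinearMap.ker ((EndOf T - μ • 1) ^ (r + 1)) } := by
  unfold degIdx
  congr 1
  ext r
  simp only [Set.mem_setOf_eq]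
  rw [ker_pow_eq, ker_pow_eq]

variable [Nonempty m]

lemma card_mem_degSet (T : Matrix m m ℂ) (μ : ℂ) :
    Fintype.card m ∈ { r : ℕ | 1 ≤ r ∧
      LinearMap.ker ((EndOf T - μ • 1) ^ r) = LinearMap.ker ((EndOf T - μ • 1) ^ (r + 1)) } := by
  have hfr : finrank ℂ (m → ℂ) = Fintype.card m := by
    simp [Module.finrank_pi]
  refine ⟨Fintype.card_pos, ?_⟩
  have e1 : LinearMap.ker ((EndOf T - μ • 1) ^ Fintype.card m) =
      LinearMap.ker ((EndOf T - μ • 1) ^ finrank ℂ (m → ℂ)) := by rw [hfr]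
  have e2 : LinearMap.ker ((EndOf T - μ • 1) ^ (Fintype.card m + 1)) =
      LinearMap.ker ((EndOf T - μ • 1) ^ finrank ℂ (m → ℂ)) :=
    Module.End.ker_pow_eq_ker_pow_finrank_of_le (by omega)
  exact e1.trans e2.symm

lemma degIdx_mem (T : Matrix m m ℂ) (μ : ℂ) :
    degIdx T μ ∈ { r : ℕ | 1 ≤ r ∧
      LinearMap.ker ((EndOf T - μ • 1) ^ r) = LinearMap.ker ((EndOf T - μ • 1) ^ (r + 1)) } := by
  rw [degIdx_eq]
  exact Nat.sInf_mem ⟨_, card_mem_degSet T μ⟩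

lemma one_le_degIdx (T : Matrix m m ℂ) (μ : ℂ) : 1 ≤ degIdx T μ := (degIdx_mem T μ).1

lemma degIdx_le_card (T : Matrix m m ℂ) (μ : ℂ) : degIdx T μ ≤ Fintype.card m := by
  rw [degIdx_eq]
  exact Nat.sInf_le (card_mem_degSet T μ)

lemma ker_stab (T : Matrix m m ℂ) (μ : ℂ) {s : ℕ} (hs : degIdx T μ ≤ s) :
    LinearMap.ker ((EndOf T - μ • 1) ^ s) = LinearMap.ker ((EndOf T - μ • 1) ^ degIdx T μ) := by
  have h := (degIdx_mem T μ).2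
  have := Module.End.ker_pow_constant h (s - degIdx T μ)
  rw [add_comm, Nat.sub_add_cancel hs] at this
  exact this.symm

lemma ker_pow_mono (N : Module.End ℂ (m → ℂ)) {k l : ℕ} (h : k ≤ l) :
    LinearMap.ker (N ^ k) ≤ LinearMap.ker (N ^ l) := by
  intro v hv
  rw [LinearMap.mem_ker] at hv ⊢
  rw [← Nat.sub_add_cancel h, pow_add, Module.End.mul_apply, hv, map_zero]

lemma ker_le_ker_degIdx (T : Matrix m m ℂ) (μ : ℂ) (k : ℕ) :
    LinearMap.ker ((EndOf T - μ • 1) ^ k) ≤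
      LinearMap.ker ((EndOf T - μ • 1) ^ degIdx T μ) := by
  rcases le_or_gt k (degIdx T μ) with h | h
  · exact ker_pow_mono _ h
  · rw [ker_stab T μ h.le]

lemma maxGen_le_ker (T : Matrix m m ℂ) (μ : ℂ) :
    (EndOf T).maxGenEigenspace μ ≤
      LinearMap.ker ((EndOf T - μ • 1) ^ degIdx T μ) := by
  intro v hv
  rw [Module.End.mem_maxGenEigenspace] at hv
  obtain ⟨k, hk⟩ := hv
  exact ker_le_ker_degIdx T μ k (by rwa [LinearMap.mem_ker])

/-- For an eigenvalue `μ`, a vector killed by `(T-μ)^degIdx` but not `(T-μ)^(degIdx-1)`. -/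
lemma exists_maximal_vector (T : Matrix m m ℂ) {μ : ℂ} (hμ : μ ∈ spectrum ℂ T) :
    ∃ v : m → ℂ, ((T - μ • 1) ^ degIdx T μ) *ᵥ v = 0 ∧
      ((T - μ • 1) ^ (degIdx T μ - 1)) *ᵥ v ≠ 0 := by
  have hmem : μ ∈ spectrum ℂ (EndOf T) := by rw [spectrum_endOf]; exact hμ
  have hEig : (EndOf T).HasEigenvalue μ :=
    Module.End.hasEigenvalue_iff_mem_spectrum.mpr hmem
  have key : ∃ v : m → ℂ, ((EndOf T - μ • 1) ^ degIdx T μ) v = 0 ∧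
      ((EndOf T - μ • 1) ^ (degIdx T μ - 1)) v ≠ 0 := by
    rcases eq_or_lt_of_le (one_le_degIdx T μ) with h1 | h1
    · obtain ⟨v, hv⟩ := hEig.exists_hasEigenvector
      refine ⟨v, ?_, ?_⟩
      · rw [← h1, pow_one]
        rw [LinearMap.sub_apply, LinearMap.smul_apply, Module.End.one_apply, hv.apply_eq_smul,
          sub_self]
      · rw [← h1]
        simpa using hv.2
    · -- degIdx ≥ 2 : the kernel at degIdx-1 is strictly smaller
      have hne : LinearMap.ker ((EndOf T - μ • 1) ^ (degIdx T μ - 1)) ≠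
          LinearMap.ker ((EndOf T - μ • 1) ^ (degIdx T μ - 1 + 1)) := by
        intro hEq
        have : degIdx T μ - 1 ∈ { r : ℕ | 1 ≤ r ∧
            LinearMap.ker ((EndOf T - μ • 1) ^ r) =
              LinearMap.ker ((EndOf T - μ • 1) ^ (r + 1)) } := ⟨by omega, hEq⟩
        have := Nat.sInf_le this
        rw [← degIdx_eq] at this
        omega
      have hle : LinearMap.ker ((EndOf T - μ • 1) ^ (degIdx T μ - 1)) ≤
          LinearMap.ker ((EndOf T - μ • 1) ^ (degIdx T μ - 1 + 1)) :=
        ker_pow_mono _ (by omega)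
      obtain ⟨v, hv1, hv2⟩ := SetLike.exists_of_lt (lt_of_le_of_ne hle hne)
      refine ⟨v, ?_, ?_⟩
      · have : degIdx T μ - 1 + 1 = degIdx T μ := by omega
        rw [← this]
        exact hv1
      · simpa [LinearMap.mem_ker] using hv2
  obtain ⟨v, h1, h2⟩ := key
  refine ⟨v, ?_, ?_⟩
  · have := endOf_sub_smul_pow T μ (degIdx T μ)
    rw [← endOf_apply, this]
    exact h1
  · rw [← endOf_apply, endOf_sub_smul_pow]
    exact h2

/-- A nonzero generalized eigenvector forces `μ` to be an eigenvalue. -/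
lemma mem_spectrum_of_genEig (T : Matrix m m ℂ) {μ : ℂ} {v : m → ℂ} {k : ℕ}
    (hv : ((EndOf T - μ • 1) ^ k) v = 0) (hv0 : v ≠ 0) : μ ∈ spectrum ℂ T := by
  rw [← spectrum_endOf]
  rw [← Module.End.hasEigenvalue_iff_mem_spectrum]
  refine Module.End.hasEigenvalue_of_hasGenEigenvalue (k := k) ?_
  rw [Module.End.hasGenEigenvalue_iff]
  intro hbot
  have : v ∈ (EndOf T).genEigenspace μ k := by
    rw [Module.End.mem_genEigenspace_nat, LinearMap.mem_ker]
    exact hv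
  rw [hbot] at this
  exact hv0 (by simpa using this)


lemma sum_mulVec {ι : Type*} (s : Finset ι) (A : ι → Matrix m m ℂ) (v : m → ℂ) :
    (∑ i ∈ s, A i) *ᵥ v = ∑ i ∈ s, A i *ᵥ v := by
  induction s using Finset.cons_induction with
  | empty => simp [Matrix.zero_mulVec]
  | cons i s hi ih => rw [Finset.sum_cons, Finset.sum_cons, Matrix.add_mulVec, ih]

lemma mulVec_sum_vec {ι : Type*} (s : Finset ι) (M : Matrix m m ℂ) (f : ι → (m → ℂ)) :
    M *ᵥ (∑ i ∈ s, f i) = ∑ i ∈ s, M *ᵥ f i := by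
  induction s using Finset.cons_induction with
  | empty => simp [Matrix.mulVec_zero]
  | cons i s hi ih => rw [Finset.sum_cons, Finset.sum_cons, Matrix.mulVec_add, ih]

/-- Binomial expansion of `A ^ k *ᵥ v` for a generalized eigenvector `v`. -/
lemma pow_mulVec_expand (A : Matrix m m ℂ) (μ : ℂ) {r : ℕ} {v : m → ℂ}
    (hv : ((A - μ • 1) ^ r) *ᵥ v = 0) {k : ℕ} (hk : r ≤ k + 1) :
    A ^ k *ᵥ v = ∑ j ∈ range r,
      ((k.choose j : ℂ) * μ ^ (k - j)) • (((A - μ • 1) ^ j) *ᵥ v) := by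
  have hcomm : Commute (A - μ • 1) (μ • 1) := (Commute.one_right (A - μ • 1)).smul_right μ
  have hA : A = (A - μ • 1) + μ • 1 := by abel
  have hbin : A ^ k = ∑ j ∈ range (k + 1),
      ((k.choose j : ℂ) * μ ^ (k - j)) • ((A - μ • 1) ^ j) := by
    conv_lhs => rw [hA]
    rw [hcomm.add_pow]
    refine Finset.sum_congr rfl fun j hj => ?_
    have h1 : (μ • (1 : Matrix m m ℂ)) ^ (k - j) = μ ^ (k - j) • 1 := by
      rw [smul_pow, one_pow]
    rw [h1, mul_smul_comm, mul_one, ← (Nat.cast_commute (k.choose j)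
      (μ ^ (k - j) • (A - μ • 1) ^ j)).eq, ← nsmul_eq_mul,
      ← Nat.cast_smul_eq_nsmul ℂ, smul_smul]
  rw [hbin]
  have hsum : (∑ j ∈ range (k + 1),
      ((k.choose j : ℂ) * μ ^ (k - j)) • ((A - μ • 1) ^ j)) *ᵥ v
      = ∑ j ∈ range (k + 1), ((k.choose j : ℂ) * μ ^ (k - j)) • (((A - μ • 1) ^ j) *ᵥ v) := by
    rw [sum_mulVec]
    exact Finset.sum_congr rfl fun j hj => Matrix.smul_mulVec _ _ _
  rw [hsum]
  rw [← Finset.sum_subset (Finset.range_subset_range.mpr hk)]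
  intro j hj hj'
  rw [Finset.mem_range] at hj hj'
  have hjr : r ≤ j := by omega
  have : (A - μ • 1) ^ j *ᵥ v = 0 := by
    rw [← Nat.sub_add_cancel hjr, pow_add, ← Matrix.mulVec_mulVec, hv, Matrix.mulVec_zero]
  rw [this, smul_zero]

end PartII

section PartI
variable {n d : ℕ} (X : Fin d → Matrix (Fin n) (Fin n) ℂ)

variable {n d : ℕ} (X : Fin d → Matrix (Fin n) (Fin n) ℂ)

noncomputable def P (k : ℕ) (w : Fin k → Fin d) : Matrix (Fin n) (Fin n) ℂ :=
  (List.ofFn fun i => X (w i)).prod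

lemma P_zero (w : Fin 0 → Fin d) : P X 0 w = 1 := by simp [P]

lemma P_cons (k : ℕ) (i : Fin d) (w : Fin k → Fin d) :
    P X (k + 1) (Fin.cons i w) = X i * P X k w := by
  simp [P, List.ofFn_succ, Fin.cons_succ]

lemma Tpow (k : ℕ) :
    (outerT X) ^ k = ∑ w : Fin k → Fin d, ((P X k w).map (starRingEnd ℂ)) ⊗ₖ (P X k w) := by
  induction k with
  | zero => simp [P_zero, Matrix.one_kronecker_one]
  | succ k ih =>
    rw [pow_succ', ih, outerT, Finset.sum_mul_sum]
    rw [← Fintype.sum_equiv (Fin.consEquiv (fun _ : Fin (k+1) => Fin d))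
      (fun p : Fin d × (Fin k → Fin d) => ((P X (k+1) (Fin.cons p.1 p.2)).map (starRingEnd ℂ)) ⊗ₖ
        (P X (k+1) (Fin.cons p.1 p.2)))
      (fun w => ((P X (k+1) w).map (starRingEnd ℂ)) ⊗ₖ (P X (k+1) w)) (fun p => rfl)]
    rw [Fintype.sum_prod_type]
    refine Finset.sum_congr rfl fun i _ => Finset.sum_congr rfl fun w _ => ?_
    rw [P_cons, Matrix.map_mul, ← Matrix.mul_kronecker_mul]


noncomputable def fR (k : ℕ) : ℝ :=
  ∑ a : Fin n, ∑ c : Fin n, ∑ w : Fin k → Fin d, Complex.normSq (P X k w a c)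

lemma fR_nonneg (k : ℕ) : 0 ≤ fR X k := by
  refine Finset.sum_nonneg fun a _ => Finset.sum_nonneg fun c _ =>
    Finset.sum_nonneg fun w _ => Complex.normSq_nonneg _

lemma sq_sum_le (k : ℕ) (a c : Fin n) :
    ∑ w : Fin k → Fin d, Complex.normSq (P X k w a c) ≤ fR X k := by
  calc ∑ w : Fin k → Fin d, Complex.normSq (P X k w a c)
      ≤ ∑ c', ∑ w : Fin k → Fin d, Complex.normSq (P X k w a c') :=
        Finset.single_le_sum (f := fun c' => ∑ w : Fin k → Fin d, Complex.normSq (P X k w a c'))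
          (fun c' _ => Finset.sum_nonneg fun w _ => Complex.normSq_nonneg _) (Finset.mem_univ c)
    _ ≤ fR X k :=
        Finset.single_le_sum
          (f := fun a' => ∑ c', ∑ w : Fin k → Fin d, Complex.normSq (P X k w a' c'))
          (fun a' _ => Finset.sum_nonneg fun c' _ => Finset.sum_nonneg fun w _ =>
            Complex.normSq_nonneg _) (Finset.mem_univ a)

lemma entry_bound (k : ℕ) (p q : Fin n × Fin n) :
    ‖(outerT X ^ k) p q‖ ≤ fR X k := by
  rw [Tpow, Matrix.sum_apply]
  calc ‖(∑ w : Fin k → Fin d,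
        (((P X k w).map (starRingEnd ℂ)) ⊗ₖ (P X k w)) p q)‖
      ≤ ∑ w : Fin k → Fin d, ‖
        ((((P X k w).map (starRingEnd ℂ)) ⊗ₖ (P X k w)) p q)‖ := by
        exact norm_sum_le _ _
    _ ≤ ∑ w : Fin k → Fin d, (Complex.normSq (P X k w p.1 q.1)
          + Complex.normSq (P X k w p.2 q.2)) / 2 := by
        refine Finset.sum_le_sum fun w _ => ?_
        rw [Matrix.kroneckerMap_apply, Matrix.map_apply, norm_mul]
        rw [Complex.norm_def, Complex.norm_def]
        rw [Complex.normSq_conj]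
        have h1 := Real.sq_sqrt (Complex.normSq_nonneg (P X k w p.1 q.1))
        have h2 := Real.sq_sqrt (Complex.normSq_nonneg (P X k w p.2 q.2))
        nlinarith [two_mul_le_add_sq (Real.sqrt (Complex.normSq (P X k w p.1 q.1)))
          (Real.sqrt (Complex.normSq (P X k w p.2 q.2)))]
    _ ≤ (fR X k + fR X k) / 2 := by
        rw [← Finset.sum_div, Finset.sum_add_distrib]
        gcongr
        exacts [sq_sum_le X k p.1 q.1, sq_sum_le X k p.2 q.2]
    _ = fR X k := by ring

lemma diag_sum (k : ℕ) :
    ∑ a : Fin n, ∑ c : Fin n, (outerT X ^ k) (a,a) (c,c) = (fR X k : ℂ) := by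
  rw [Tpow]
  push_cast [fR]
  refine Finset.sum_congr rfl fun a _ => ?_
  refine Finset.sum_congr rfl fun c _ => ?_
  rw [Matrix.sum_apply]
  refine Finset.sum_congr rfl fun w _ => ?_
  rw [Matrix.kroneckerMap_apply, Matrix.map_apply]
  rw [mul_comm, Complex.mul_conj]


end PartI
end Stmt13

open Stmt13

/-- degenerate quantum Perron–Frobenius: `T = Σᵢ conj(Xᵢ) ⊗ Xᵢ` has a real
nonnegative eigenvalue `λ` such that every eigenvalue `λ'` satisfies either
(`λ = |λ'|` and the degeneracy index of `λ` is at least that of `λ'`) or `λ > |λ'|`;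
in particular `λ = ρ(T)`. -/
theorem stmt13 {n d : ℕ} (hn : 0 < n) (X : Fin d → Matrix (Fin n) (Fin n) ℂ) :
    ∃ lam : ℝ, 0 ≤ lam ∧ ((lam : ℂ) ∈ spectrum ℂ (outerT X)) ∧
      (∀ mu ∈ spectrum ℂ (outerT X),
        (lam = ‖mu‖ ∧ degIdx (outerT X) mu ≤ degIdx (outerT X) (lam : ℂ)) ∨
          ‖mu‖ < lam) ∧
      lam = specRad (outerT X) := by
  classical
  haveI : Nonempty (Fin n) := ⟨⟨0, hn⟩⟩
  set T := outerT X with hT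
  have hfin : (spectrum ℂ T).Finite := T.finite_spectrum
  have hnon : (spectrum ℂ T).Nonempty :=
    spectrum.nonempty_of_isAlgClosed_of_finiteDimensional ℂ T
  set ρ : ℝ := specRad T with hρdef
  have himfin : ((fun z : ℂ => ‖z‖) '' spectrum ℂ T).Finite := hfin.image _
  have himne : ((fun z : ℂ => ‖z‖) '' spectrum ℂ T).Nonempty := hnon.image _
  have hmem : ρ ∈ (fun z : ℂ => ‖z‖) '' spectrum ℂ T := himne.csSup_mem himfin
  obtain ⟨μ₀, hμ₀, hμ₀abs⟩ := hmem
  have habs_le : ∀ μ ∈ spectrum ℂ T, ‖μ‖ ≤ ρ := fun μ hμ =>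
    le_csSup himfin.bddAbove (Set.mem_image_of_mem _ hμ)
  have hμ₀abs : ‖μ₀‖ = ρ := hμ₀abs
  have hρ0 : 0 ≤ ρ := hμ₀abs ▸ norm_nonneg μ₀
  rcases eq_or_lt_of_le hρ0 with hρzero | hρpos
  · -- ρ = 0 : all eigenvalues are 0
    have hμ00 : μ₀ = 0 := by
      have : ‖μ₀‖ = 0 := by rw [hμ₀abs, ← hρzero]
      exact norm_eq_zero.mp this
    refine ⟨0, le_refl 0, ?_, ?_, ?_⟩
    · rw [Complex.ofReal_zero, ← hμ00]
      exact hμ₀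
    · intro mu hmu
      have hmu0 : mu = 0 := by
        have h1 : ‖mu‖ ≤ 0 := by rw [hρzero]; exact habs_le mu hmu
        exact norm_eq_zero.mp (le_antisymm h1 (norm_nonneg mu))
      left
      constructor
      · rw [hmu0]; simp
      · rw [hmu0, Complex.ofReal_zero]
    · exact hρzero
  · -- main case : ρ > 0
    set D := Fintype.card (Fin n × Fin n) with hD
    -- peripheral eigenvalue with maximal degeneracy index
    have hPene : μ₀ ∈ hfin.toFinset.filter (fun μ => ‖μ‖ = ρ) := by
      rw [Finset.mem_filter, Set.Finite.mem_toFinset]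
      exact ⟨hμ₀, hμ₀abs⟩
    obtain ⟨μs, hμsPe, hμsmax⟩ :=
      Finset.exists_max_image (hfin.toFinset.filter (fun μ => ‖μ‖ = ρ))
        (degIdx T) ⟨μ₀, hPene⟩
    rw [Finset.mem_filter, Set.Finite.mem_toFinset] at hμsPe
    obtain ⟨hμs_spec, hμs_abs⟩ := hμsPe
    have hμs0 : μs ≠ 0 := by
      intro h
      rw [h] at hμs_abs
      simp at hμs_abs
      exact hρpos.ne hμs_abs
    set η := degIdx T μs with hη
    have hη1 : 1 ≤ η := one_le_degIdx T μs
    set η' := η - 1 with hη'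
    have hηe : η = η' + 1 := by omega
    have hηD : η ≤ D := degIdx_le_card T μs
    -- maximal generalized eigenvector
    obtain ⟨v, hv0, hv1⟩ := exists_maximal_vector T hμs_spec
    obtain ⟨p, hp⟩ := Function.ne_iff.mp hv1
    set w : ℕ → ℂ := fun j => (((T - μs • 1) ^ j) *ᵥ v) p with hw
    have hβ : w η' ≠ 0 := hp
    set C := ∑ q, ‖v q‖ with hCdef
    have hvne : v ≠ 0 := by
      intro hcon
      apply hv1
      rw [hcon, Matrix.mulVec_zero]
    have hC0 : 0 < C := by
      obtain ⟨q, hq⟩ := Function.ne_iff.mp hvne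
      have h1 : 0 < ‖v q‖ := by
        simpa using norm_pos_iff.mpr hq
      exact lt_of_lt_of_le h1 (Finset.single_le_sum
        (f := fun q => ‖v q‖) (fun q _ => norm_nonneg _) (Finset.mem_univ q))
    set g : ℕ → ℂ := fun k => ((T ^ k) *ᵥ v) p with hg
    have hgexp : ∀ k, η' ≤ k → g k =
        ∑ j ∈ range (η' + 1), ((k.choose j : ℂ) * μs ^ (k - j)) * w j := by
      intro k hk
      have := pow_mulVec_expand T μs (r := η) hv0 (k := k) (by omega)
      rw [hg]
      simp only [this, hηe]
      rw [Finset.sum_apply]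
      exact Finset.sum_congr rfl fun j hj => by rw [Pi.smul_apply, smul_eq_mul, hw]
    -- the normalized sequence g k / (choose * μs^{k-η'}) tends to w η'
    have hqlim : Tendsto (fun k : ℕ => g k / ((k.choose η' : ℂ) * μs ^ (k - η')))
        atTop (𝓝 (w η')) := by
      have hsum : Tendsto (fun k : ℕ => ∑ j ∈ range (η' + 1),
          ((k.choose j : ℂ) * μs ^ (k - j) * w j) / ((k.choose η' : ℂ) * μs ^ (k - η')))
          atTop (𝓝 (0 + w η')) := by
        simp only [Finset.sum_range_succ]
        refine Tendsto.add ?_ ?_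
        · have h1 : ∀ j ∈ range η', Tendsto (fun k : ℕ =>
              ((k.choose j : ℂ) * μs ^ (k - j) * w j) /
                ((k.choose η' : ℂ) * μs ^ (k - η'))) atTop (𝓝 0) := fun j hj =>
            term_tendsto_zero hρpos hμs_abs (Finset.mem_range.mp hj) (w j)
          have := tendsto_finset_sum (range η') h1
          simpa using this
        · refine tendsto_const_nhds.congr' ?_
          filter_upwards [eventually_ge_atTop η'] with k hk
          have hch : ((k.choose η' : ℕ) : ℂ) ≠ 0 := by
            exact_mod_cast (Nat.cast_ne_zero (R := ℂ)).mpr (Nat.choose_pos hk).ne'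
          have hpow : μs ^ (k - η') ≠ 0 := pow_ne_zero _ hμs0
          field_simp
      rw [zero_add] at hsum
      refine hsum.congr' ?_
      filter_upwards [eventually_ge_atTop η'] with k hk
      rw [hgexp k hk, Finset.sum_div]
    -- entrywise bound : |g k| ≤ C * fR k
    have hgle : ∀ k, ‖g k‖ ≤ C * fR X k := by
      intro k
      have habsg : ‖g k‖ = ‖∑ q, (T ^ k) p q * v q‖ := rfl
      rw [habsg]
      calc ‖∑ q, (T ^ k) p q * v q‖
          ≤ ∑ q, ‖(T ^ k) p q * v q‖ := norm_sum_le _ _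
        _ ≤ ∑ q, fR X k * ‖v q‖ := by
            refine Finset.sum_le_sum fun q _ => ?_
            rw [norm_mul]
            exact mul_le_mul_of_nonneg_right (entry_bound X k p q) (norm_nonneg _)
        _ = C * fR X k := by rw [← Finset.mul_sum, mul_comm]
    -- normalization sequence and lower bound
    set Nk : ℕ → ℝ := fun k => (k.choose η' : ℝ) * ρ ^ (k - η') with hNk
    set hseq : ℕ → ℝ := fun k => fR X k / Nk k with hhseq
    have hNk0 : ∀ k, 0 ≤ Nk k := by
      intro k
      rw [hNk]
      positivity
    have hh0 : ∀ k, 0 ≤ hseq k := fun k =>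
      div_nonneg (fR_nonneg X k) (hNk0 k)
    set δ := ‖w η'‖ / (2 * C) with hδdef
    have hδ0 : 0 < δ := by
      have h1 := norm_pos_iff.mpr hβ
      rw [hδdef]
      exact div_pos h1 (by linarith)
    have hδC : δ * C = ‖w η'‖ / 2 := by
      rw [hδdef]
      field_simp
    have hlow : ∀ᶠ k in atTop, δ ≤ hseq k := by
      have hhalf : ∀ᶠ k in atTop, ‖w η'‖ / 2 ≤
          ‖g k / ((k.choose η' : ℂ) * μs ^ (k - η'))‖ := by
        refine hqlim.norm.eventually (eventually_ge_nhds ?_)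
        have := norm_pos_iff.mpr hβ
        linarith
      filter_upwards [hhalf, eventually_ge_atTop (η' + 1)] with k hk1 hk2
      have hkη : η' ≤ k := by omega
      have hchpos : (0:ℝ) < (k.choose η' : ℝ) := by exact_mod_cast Nat.choose_pos hkη
      have hNkpos : 0 < Nk k := by rw [hNk]; positivity
      have habsden : ‖(k.choose η' : ℂ) * μs ^ (k - η')‖ = Nk k := by
        rw [norm_mul, norm_pow, Complex.norm_natCast, hμs_abs, hNk]
      have e1 : ‖g k‖ =
          ‖g k / ((k.choose η' : ℂ) * μs ^ (k - η'))‖ * Nk k := by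
        rw [norm_div, habsden, div_mul_cancel₀]
        exact hNkpos.ne'
      rw [hhseq]
      rw [le_div_iff₀ hNkpos]
      have h2 := hgle k
      rw [e1] at h2
      nlinarith [hk1, hNkpos.le, hC0, mul_le_mul_of_nonneg_right hk1 hNkpos.le]
    -- the main claim, proved by contradiction via Cesàro averaging
    have hmain : ((ρ : ℝ) : ℂ) ∈ spectrum ℂ T ∧ η ≤ degIdx T ((ρ : ℝ) : ℂ) := by
      by_contra hcon
      -- decompose the diagonal test vector
      set e : (Fin n × Fin n) → ℂ := fun pq => if pq.1 = pq.2 then 1 else 0 with he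
      have hfCk : ∀ k, ∑ a : Fin n, ((T ^ k) *ᵥ e) (a, a) = (fR X k : ℂ) := by
        intro k
        have h1 : ∀ a : Fin n, ((T ^ k) *ᵥ e) (a, a) = ∑ c : Fin n, (T ^ k) (a,a) (c,c) := by
          intro a
          have : ((T ^ k) *ᵥ e) (a, a) = ∑ q, (T ^ k) (a,a) q * e q := rfl
          rw [this, Fintype.sum_prod_type]
          refine Finset.sum_congr rfl fun c1 _ => ?_
          rw [Finset.sum_eq_single c1]
          · simp [he]
          · intro c2 _ hne
            simp [he, Ne.symm hne]
          · intro h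
            exact absurd (Finset.mem_univ c1) h
        rw [Finset.sum_congr rfl fun a _ => h1 a]
        exact diag_sum X k
      have htop := Module.End.iSup_maxGenEigenspace_eq_top (EndOf T)
      have hetop : e ∈ ⨆ μ : ℂ, (EndOf T).maxGenEigenspace μ := by
        rw [htop]; trivial
      rw [Submodule.mem_iSup_iff_exists_finsupp] at hetop
      obtain ⟨cf, hcf, hcfsum⟩ := hetop
      set S := cf.support with hS
      have hesum : e = ∑ μ ∈ S, cf μ := by
        rw [← hcfsum]
        rfl
      have hkerS : ∀ μ, ((EndOf T - μ • 1) ^ degIdx T μ) (cf μ) = 0 := by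
        intro μ
        have h1 := maxGen_le_ker T μ (hcf μ)
        rwa [LinearMap.mem_ker] at h1
      have hkerM : ∀ μ, ((T - μ • 1) ^ degIdx T μ) *ᵥ (cf μ) = 0 := by
        intro μ
        have := hkerS μ
        rwa [← endOf_sub_smul_pow, endOf_apply] at this
      have hspecS : ∀ μ ∈ S, μ ∈ spectrum ℂ T := fun μ hμ =>
        mem_spectrum_of_genEig T (hkerS μ) (Finsupp.mem_support_iff.mp hμ)
      set b : ℂ → ℕ → ℂ := fun μ j =>
        ∑ a : Fin n, (((T - μ • 1) ^ j) *ᵥ (cf μ)) (a, a) with hb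
      set u : ℂ → ℕ → ℕ → ℂ := fun μ j k =>
        ((k.choose j : ℂ) * μ ^ (k - j) * b μ j) /
          ((k.choose η' : ℂ) * ((ρ : ℝ) : ℂ) ^ (k - η')) with hu
      set W : ℕ → ℂ := fun k => ∑ μ ∈ S, ∑ j ∈ range (degIdx T μ), u μ j k with hW
      -- the exact expansion for k ≥ D
      have hUW : ∀ k, D ≤ k → ((hseq k : ℝ) : ℂ) = W k := by
        intro k hk
        have hkη : η' ≤ k := by omega
        have hnum : (fR X k : ℂ) = ∑ μ ∈ S, ∑ j ∈ range (degIdx T μ),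
            ((k.choose j : ℂ) * μ ^ (k - j) * b μ j) := by
          rw [← hfCk k, hesum, mulVec_sum_vec]
          have h1 : ∀ a : Fin n, (∑ μ ∈ S, (T ^ k) *ᵥ cf μ) (a,a)
              = ∑ μ ∈ S, ((T ^ k) *ᵥ cf μ) (a,a) := fun a => Finset.sum_apply _ _ _
          rw [Finset.sum_congr rfl fun a _ => h1 a, Finset.sum_comm]
          refine Finset.sum_congr rfl fun μ hμ => ?_
          have hrk : degIdx T μ ≤ k + 1 := by
            have := degIdx_le_card T μ
            omega
          have hexp := pow_mulVec_expand T μ (r := degIdx T μ) (hkerM μ) hrk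
          rw [Finset.sum_congr rfl fun a _ => by rw [hexp, Finset.sum_apply]]
          rw [Finset.sum_comm]
          refine Finset.sum_congr rfl fun j hj => ?_
          simp only [hb]
          rw [Finset.mul_sum]
          refine Finset.sum_congr rfl fun a _ => ?_
          rw [Pi.smul_apply, smul_eq_mul]
        have hcast : ((hseq k : ℝ):ℂ)
            = (fR X k : ℂ) / ((k.choose η' : ℂ) * ((ρ:ℝ):ℂ) ^ (k - η')) := by
          simp only [hhseq, hNk]
          push_cast
          ring
        rw [hcast, hnum, Finset.sum_div]
        simp only [hW, hu]
        exact Finset.sum_congr rfl fun μ _ => by rw [Finset.sum_div]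
      -- Cesàro average of W tends to 0
      have hWces : Tendsto (fun N : ℕ => (N:ℝ)⁻¹ • ∑ k ∈ range N, W k) atTop (𝓝 0) := by
        have hswap : ∀ N : ℕ, ∑ k ∈ range N, W k
            = ∑ μ ∈ S, ∑ j ∈ range (degIdx T μ), ∑ k ∈ range N, u μ j k := by
          intro N
          simp only [hW]
          rw [Finset.sum_comm]
          exact Finset.sum_congr rfl fun μ _ => Finset.sum_comm
        have heq : (fun N : ℕ => (N:ℝ)⁻¹ • ∑ k ∈ range N, W k)
            = fun N : ℕ => ∑ μ ∈ S, ∑ j ∈ range (degIdx T μ),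
              ((N:ℝ)⁻¹ • ∑ k ∈ range N, u μ j k) := by
          funext N
          rw [hswap, Finset.smul_sum]
          exact Finset.sum_congr rfl fun μ _ => Finset.smul_sum
        rw [heq]
        have hzero : (0:ℂ) = ∑ μ ∈ S, ∑ j ∈ range (degIdx T μ), (0:ℂ) := by simp
        rw [hzero]
        refine tendsto_finset_sum _ fun μ hμ => tendsto_finset_sum _ fun j hj => ?_
        have hμspec := hspecS μ hμ
        have hμle := habs_le μ hμspec
        have hjlt := Finset.mem_range.mp hj
        simp only [hu]
        refine term_cesaro hρpos η' (b μ j) ?_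
        rcases eq_or_lt_of_le hμle with heq2 | hlt2
        · have hμPe : μ ∈ hfin.toFinset.filter (fun ν => ‖ν‖ = ρ) := by
            rw [Finset.mem_filter, Set.Finite.mem_toFinset]
            exact ⟨hμspec, heq2⟩
          have hdle : degIdx T μ ≤ η := hμsmax μ hμPe
          rcases lt_or_eq_of_le (show j ≤ η' by omega) with hj2 | hj2
          · exact Or.inr (Or.inl ⟨heq2, hj2⟩)
          · refine Or.inr (Or.inr ⟨heq2, hj2, ?_⟩)
            intro hμρ
            apply hcon
            rw [← hμρ]
            exact ⟨hμspec, by omega⟩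
        · exact Or.inl hlt2
      -- hence Cesàro average of hseq tends to 0
      have hHces : Tendsto (fun N : ℕ => (N:ℝ)⁻¹ * ∑ k ∈ range N, hseq k) atTop (𝓝 0) := by
        have hdiffces : Tendsto (fun N : ℕ => (N:ℝ)⁻¹ • ∑ k ∈ range N,
            (((hseq k : ℝ) : ℂ) - W k)) atTop (𝓝 0) := by
          refine cesaro_bounded _ (∑ k ∈ range D, ‖((hseq k : ℝ) : ℂ) - W k‖) ?_
          intro N
          have hsplit : ∑ k ∈ range N, (((hseq k : ℝ):ℂ) - W k)
              = ∑ k ∈ range (min N D), (((hseq k : ℝ):ℂ) - W k) := by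
            rcases le_or_gt N D with h | h
            · rw [min_eq_left h]
            · rw [min_eq_right h.le]
              rw [← Finset.sum_range_add_sum_Ico _ h.le]
              have hz : ∑ k ∈ Finset.Ico D N, (((hseq k : ℝ):ℂ) - W k) = 0 :=
                Finset.sum_eq_zero fun k hk => by
                  rw [hUW k (Finset.mem_Ico.mp hk).1, sub_self]
              rw [hz, add_zero]
          rw [hsplit]
          refine (norm_sum_le _ _).trans ?_
          refine Finset.sum_le_sum_of_subset_of_nonneg ?_ (fun k _ _ => norm_nonneg _)
          exact Finset.range_subset_range.mpr (min_le_right N D)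
        have hsum := hWces.add hdiffces
        rw [add_zero] at hsum
        have heqf : (fun N : ℕ => (N:ℝ)⁻¹ • ∑ k ∈ range N, W k
            + (N:ℝ)⁻¹ • ∑ k ∈ range N, (((hseq k : ℝ):ℂ) - W k))
            = fun N : ℕ => (N:ℝ)⁻¹ • ∑ k ∈ range N, ((hseq k : ℝ):ℂ) := by
          funext N
          rw [← smul_add, ← Finset.sum_add_distrib]
          congr 1
          refine Finset.sum_congr rfl fun k _ => ?_
          ring
        rw [heqf] at hsum
        have hcast2 : ∀ N : ℕ, ((N:ℝ)⁻¹ • ∑ k ∈ range N, ((hseq k : ℝ):ℂ))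
            = (((N:ℝ)⁻¹ * ∑ k ∈ range N, hseq k : ℝ) : ℂ) := by
          intro N
          have h1 : ∑ k ∈ range N, ((hseq k : ℝ):ℂ) = ((∑ k ∈ range N, hseq k : ℝ) : ℂ) := by
            push_cast
            rfl
          rw [h1, Complex.real_smul, ← Complex.ofReal_mul]
        rw [tendsto_zero_iff_norm_tendsto_zero]
        have hnorm := tendsto_zero_iff_norm_tendsto_zero.mp hsum
        refine hnorm.congr fun N => ?_
        rw [hcast2 N, Complex.norm_real]
      -- contradiction with the lower bound
      obtain ⟨K, hK⟩ := eventually_atTop.mp hlow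
      have hltends : Tendsto (fun N : ℕ => (1 - (K:ℝ)/N) * δ) atTop (𝓝 δ) := by
        have h1 := tendsto_const_div_atTop_nhds_zero_nat (K:ℝ)
        have h2 := ((tendsto_const_nhds (x := (1:ℝ)) (f := atTop)).sub h1).mul_const δ
        simpa using h2
      have hlower : ∀ᶠ N : ℕ in atTop,
          (1 - (K:ℝ)/N) * δ ≤ (N:ℝ)⁻¹ * ∑ k ∈ range N, hseq k := by
        filter_upwards [eventually_ge_atTop (K + 1)] with N hN
        have hNpos : (0:ℝ) < N := by
          have : 0 < N := by omega
          exact_mod_cast this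
        have hsum1 : ((N - K : ℕ) : ℝ) * δ ≤ ∑ k ∈ range N, hseq k := by
          have hsub : Finset.Ico K N ⊆ range N := by
            rw [Finset.range_eq_Ico]
            exact Finset.Ico_subset_Ico (Nat.zero_le K) le_rfl
          have h1 : ∑ k ∈ Finset.Ico K N, hseq k ≤ ∑ k ∈ range N, hseq k :=
            Finset.sum_le_sum_of_subset_of_nonneg hsub (fun k _ _ => hh0 k)
          have h2 : ((N - K : ℕ) : ℝ) * δ ≤ ∑ k ∈ Finset.Ico K N, hseq k := by
            have h3 : (Finset.Ico K N).card • δ ≤ ∑ k ∈ Finset.Ico K N, hseq k :=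
              Finset.card_nsmul_le_sum _ _ _ (fun k hk => hK k (Finset.mem_Ico.mp hk).1)
            rwa [Nat.card_Ico, nsmul_eq_mul] at h3
          linarith
        have hcast : ((N - K : ℕ) : ℝ) = (N : ℝ) - K := by
          have : K ≤ N := by omega
          push_cast [this]
          ring
        calc (1 - (K:ℝ)/N) * δ = (N:ℝ)⁻¹ * (((N:ℝ) - K) * δ) := by
              field_simp
            _ ≤ (N:ℝ)⁻¹ * ∑ k ∈ range N, hseq k := by
              rw [← hcast]
              exact mul_le_mul_of_nonneg_left hsum1 (by positivity)
      have hδle : δ ≤ 0 := le_of_tendsto_of_tendsto hltends hHces hlower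
      linarith
    -- conclusion
    refine ⟨ρ, hρ0, hmain.1, ?_, rfl⟩
    intro mu hmu
    rcases eq_or_lt_of_le (habs_le mu hmu) with heq | hlt
    · left
      refine ⟨heq.symm, ?_⟩
      have hmuPe : mu ∈ hfin.toFinset.filter (fun μ => ‖μ‖ = ρ) := by
        rw [Finset.mem_filter, Set.Finite.mem_toFinset]
        exact ⟨hmu, heq⟩
      exact le_trans (hμsmax mu hmuPe) hmain.2
    · right
      exact hlt
end
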